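/- arXiv:math/0605159 — 7 statements merged into one kernel-verified Lean document; each statement's English description precedes it below -/
import Mathlib

section
/- Let a ≥ 1/2 be real. Define φ : (0,1) → ℝ by φ(u) = [Γ(2a)Γ(6a−1)/(Γ(4a)Γ(4a−1))] · u^a · Σ_{n=0}^∞ [(2a)_n (1−2a)_n / ((4a)_n n!)] u^n. Then: (i) for every u ∈ (0,1) the series converges; (ii) φ satisfies the ordinary differential equation u²(1−u)²φ''(u) + 2u(a − u + (1−a)u²)φ'(u) − a(3a−1)(1−u)²φ(u) = 0 on (0,1); and (iii) φ(u) → 0 as u → 0+ and φ(u) → 1 as u → 1−. -/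
/-!
The series is Gauss's `₂F₁(2a, 1 - 2a; 4a; u)`, whose radius of convergence is at least `1`.
Differentiating termwise and using the recurrence of the coefficients gives the hypergeometric
equation `u (1 - u) F'' + (4a - 2u) F' - 2a (1 - 2a) F = 0`, and the substitution `φ = K u^a F`
turns it into the stated equation. At `0`, `φ(u) ~ K u^a → 0`. At `1` we use Euler's integral
`B(2a, 2a) F(u) = ∫₀¹ t^(2a-1) (1-t)^(2a-1) (1-ut)^(2a-1) dt`: since `2a - 1 ≥ 0` the integrand
is dominated uniformly in `u`, so `F(1⁻) = B(2a, 4a - 1) / B(2a, 2a)`, which is exactly `1 / K`.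
-/

open Set Filter Polynomial Topology FormalMultilinearSeries

section PowerSeries

variable {𝕜 : Type*} [NontriviallyNormedField 𝕜] {p : ℕ → 𝕜} {x : 𝕜}

def derivCoeff (p : ℕ → 𝕜) (n : ℕ) : 𝕜 := (n + 1) * p (n + 1)

theorem radius_ofScalars_le_radius_ofScalars_derivCoeff :
    (ofScalars 𝕜 p).radius ≤ (ofScalars 𝕜 (derivCoeff p)).radius := by
  refine (radius_le_radius_derivSeries _).trans (radius_le_of_le fun n => ?_)
  rw [ofScalars_norm, norm_apply_eq_norm_coef]
  calc ‖derivCoeff p n‖ = ‖(ofScalars 𝕜 p).derivSeries.coeff n 1‖ := by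
        simp [derivCoeff, coeff_ofScalars, nsmul_eq_mul]
    _ ≤ ‖(ofScalars 𝕜 p).derivSeries.coeff n‖ := by
        simpa using ((ofScalars 𝕜 p).derivSeries.coeff n).le_opNorm 1

theorem hasSum_ofScalarsSum [CompleteSpace 𝕜] (hx : ‖x‖ₑ < (ofScalars 𝕜 p).radius) :
    HasSum (fun n => p n * x ^ n) (ofScalarsSum p x) := by
  have h := (ofScalars 𝕜 p).hasSum (mem_eball_zero_iff.2 hx)
  simp only [ofScalars_apply_eq, smul_eq_mul] at h
  exact h

theorem hasDerivAt_ofScalarsSum [CompleteSpace 𝕜] (hx : ‖x‖ₑ < (ofScalars 𝕜 p).radius) :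
    HasDerivAt (ofScalarsSum p) (ofScalarsSum (derivCoeff p) x) x := by
  have hd := ((ofScalars 𝕜 p).hasFDerivAt_sum hx).hasDerivAt
  have hs := (ofScalars 𝕜 p).derivSeries.hasSum
    (mem_eball_zero_iff.2 (hx.trans_le (radius_le_radius_derivSeries _)))
  have h1 : HasSum (fun n => derivCoeff p n * x ^ n) ((ofScalars 𝕜 p).derivSeries.sum x 1) := by
    have h := (ContinuousLinearMap.apply 𝕜 𝕜 (1 : 𝕜)).hasSum hs
    simp only [ContinuousLinearMap.apply_apply, apply_eq_prod_smul_coeff] at h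
    simpa [derivCoeff, mul_comm] using h
  exact hd.congr_deriv (h1.unique
    (hasSum_ofScalarsSum (hx.trans_le radius_ofScalars_le_radius_ofScalars_derivCoeff)))

theorem hasSum_natCast_mul_mul_pow {s : 𝕜} (h : HasSum (fun n => derivCoeff p n * x ^ n) s) :
    HasSum (fun n => n * p n * x ^ n) (x * s) := by
  rw [← hasSum_nat_add_iff' 1]
  simpa [derivCoeff, pow_succ, mul_assoc, mul_comm, mul_left_comm] using h.mul_left x

end PowerSeries

section Hypergeometric

variable {𝕂 : Type*}

theorem one_le_radius_ordinaryHypergeometricSeries [RCLike 𝕂] (𝔸 : Type*) [NormedDivisionRing 𝔸]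
    [NormedAlgebra 𝕂 𝔸] (α β γ : 𝕂) : 1 ≤ (ordinaryHypergeometricSeries 𝔸 α β γ).radius := by
  by_cases h : ∀ k : ℕ, (k : 𝕂) ≠ -α ∧ (k : 𝕂) ≠ -β ∧ (k : 𝕂) ≠ -γ
  · rw [ordinaryHypergeometricSeries_radius_eq_one 𝔸 α β γ h]
  · obtain ⟨k, hk⟩ := not_forall.1 h
    rcases (by tauto : (k : 𝕂) = -α ∨ (k : 𝕂) = -β ∨ (k : 𝕂) = -γ) with hα | hβ | hγ
    · rw [neg_eq_iff_eq_neg.1 hα.symm, ordinaryHypergeometric_radius_top_of_neg_nat₁]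
      exact le_top
    · rw [neg_eq_iff_eq_neg.1 hβ.symm, ordinaryHypergeometric_radius_top_of_neg_nat₂]
      exact le_top
    · rw [neg_eq_iff_eq_neg.1 hγ.symm, ordinaryHypergeometric_radius_top_of_neg_nat₃]
      exact le_top

theorem ordinaryHypergeometricCoefficient_succ [Field 𝕂] [CharZero 𝕂] {α β γ : 𝕂}
    (hγ : ∀ k : ℕ, (k : 𝕂) ≠ -γ) (n : ℕ) :
    (n + 1) * (γ + n) * ordinaryHypergeometricCoefficient α β γ (n + 1)
      = (α + n) * (β + n) * ordinaryHypergeometricCoefficient α β γ n := by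
  have hγn : (ascPochhammer 𝕂 n).eval γ ≠ 0 := fun h0 => by
    obtain ⟨k, -, hk⟩ := (ascPochhammer_eval_eq_zero_iff n γ).1 h0
    exact hγ k hk
  have hγn' : γ + n ≠ 0 := fun h0 => hγ n (eq_neg_of_add_eq_zero_right h0 ▸ rfl)
  simp only [ordinaryHypergeometricCoefficient, ascPochhammer_succ_eval, Nat.factorial_succ]
  push_cast
  field_simp

variable [RCLike 𝕂] {α β γ : 𝕂} {x : 𝕂}

theorem enorm_lt_radius_ordinaryHypergeometricSeries (hx : ‖x‖ < 1) :
    ‖x‖ₑ < (ordinaryHypergeometricSeries 𝕂 α β γ).radius := by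
  refine lt_of_lt_of_le ?_ (one_le_radius_ordinaryHypergeometricSeries 𝕂 α β γ)
  rwa [← ofReal_norm, ENNReal.ofReal_lt_one]

theorem analyticOnNhd_ordinaryHypergeometric :
    AnalyticOnNhd 𝕂 (₂F₁ α β γ) (Metric.ball (0 : 𝕂) 1) := fun _ hx =>
  (ordinaryHypergeometricSeries 𝕂 α β γ).analyticOnNhd _
    (mem_eball_zero_iff.2 (enorm_lt_radius_ordinaryHypergeometricSeries (mem_ball_zero_iff.1 hx)))

theorem ordinaryHypergeometric_ode (hγ : ∀ k : ℕ, (k : 𝕂) ≠ -γ) (hx : ‖x‖ < 1) :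
    x * (1 - x) * deriv (deriv (₂F₁ α β γ)) x + (γ - (α + β + 1) * x) * deriv (₂F₁ α β γ) x
      - α * β * ₂F₁ α β γ x = 0 := by
  set C := ordinaryHypergeometricCoefficient α β γ
  have hR : ∀ {y : 𝕂}, ‖y‖ < 1 → ∀ {q : ℕ → 𝕂}, (ofScalars 𝕂 C).radius ≤ (ofScalars 𝕂 q).radius →
      ‖y‖ₑ < (ofScalars 𝕂 q).radius := fun hy _ hq =>
    (enorm_lt_radius_ordinaryHypergeometricSeries hy).trans_le hq
  have hR1 := (radius_ofScalars_le_radius_ofScalars_derivCoeff (p := C))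
  have hR2 := hR1.trans (radius_ofScalars_le_radius_ofScalars_derivCoeff (p := derivCoeff C))
  have hD : ∀ y ∈ Metric.ball (0 : 𝕂) 1, deriv (₂F₁ α β γ) y = ofScalarsSum (derivCoeff C) y :=
    fun y hy => (hasDerivAt_ofScalarsSum (hR (mem_ball_zero_iff.1 hy) le_rfl)).deriv
  have hDD : deriv (deriv (₂F₁ α β γ)) x = ofScalarsSum (derivCoeff (derivCoeff C)) x := by
    rw [Filter.EventuallyEq.deriv_eq (Filter.eventually_of_mem
      (Metric.isOpen_ball.mem_nhds (mem_ball_zero_iff.2 hx)) hD)]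
    exact (hasDerivAt_ofScalarsSum (hR hx hR1)).deriv
  rw [hDD, hD x (mem_ball_zero_iff.2 hx)]
  have S0 : HasSum (fun n => C n * x ^ n) (₂F₁ α β γ x) := hasSum_ofScalarsSum (hR hx le_rfl)
  have S1 := hasSum_ofScalarsSum (hR hx hR1)
  have S2 := hasSum_ofScalarsSum (hR hx hR2)
  have T0 := hasSum_natCast_mul_mul_pow S1
  have T1 := hasSum_natCast_mul_mul_pow S2
  -- `x² F''` as `∑ n (n - 1) C n xⁿ`: the `derivCoeff` of `(n - 1) C n` is `n · derivCoeff C n`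
  have T2 : HasSum (fun n => n * ((n - 1) * C n) * x ^ n) (x * (x * _)) :=
    hasSum_natCast_mul_mul_pow (T1.congr_fun fun n => by simp only [derivCoeff]; push_cast; ring)
  have hsum := ((T1.sub T2).add ((S1.mul_left γ).sub (T0.mul_left (α + β + 1)))).sub
    (S0.mul_left (α * β))
  have hrec : ∀ n : ℕ, (n + 1) * (γ + n) * C (n + 1) = (α + n) * (β + n) * C n :=
    ordinaryHypergeometricCoefficient_succ hγ
  clear_value C
  have hzero := hsum.unique (hasSum_zero.congr_fun fun n => by
    simp only [derivCoeff]
    linear_combination x ^ n * hrec n)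
  linear_combination hzero

end Hypergeometric

section Euler

open MeasureTheory ProbabilityTheory

theorem integral_rpow_mul_one_sub_rpow {p q : ℝ} (hp : 0 < p) (hq : 0 < q) :
    ∫ t in (0 : ℝ)..1, t ^ (p - 1) * (1 - t) ^ (q - 1) = beta p q := by
  have h : Complex.betaIntegral p q
      = ((∫ t in (0 : ℝ)..1, t ^ (p - 1) * (1 - t) ^ (q - 1) : ℝ) : ℂ) := by
    rw [Complex.betaIntegral, ← intervalIntegral.integral_ofReal]
    refine intervalIntegral.integral_congr fun t ht => ?_
    rw [uIcc_of_le zero_le_one] at ht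
    push_cast [Complex.ofReal_cpow ht.1, Complex.ofReal_cpow (sub_nonneg.2 ht.2)]
    rfl
  rw [beta_eq_betaIntegralReal p q hp hq, h, Complex.ofReal_re]

theorem intervalIntegrable_rpow_mul_one_sub_rpow {p q : ℝ} (hp : 0 < p) (hq : 0 < q) :
    IntervalIntegrable (fun t => t ^ (p - 1) * (1 - t) ^ (q - 1)) volume 0 1 :=
  intervalIntegral.intervalIntegrable_of_integral_ne_zero
    (by rw [integral_rpow_mul_one_sub_rpow hp hq]; exact (beta_pos hp hq).ne')

theorem Real.Gamma_add_nat_eq_ascPochhammer_mul {x : ℝ} (hx : 0 < x) (n : ℕ) :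
    Real.Gamma (x + n) = (ascPochhammer ℝ n).eval x * Real.Gamma x := by
  induction n with
  | zero => simp
  | succ n ih =>
    push_cast
    rw [← add_assoc, Real.Gamma_add_one (by positivity), ih, ascPochhammer_succ_eval]
    ring

theorem beta_add_nat {p q : ℝ} (hp : 0 < p) (hq : 0 < q) (n : ℕ) :
    beta (p + n) q
      = beta p q * ((ascPochhammer ℝ n).eval p / (ascPochhammer ℝ n).eval (p + q)) := by
  have hpq : (0 : ℝ) < p + q := by positivity
  have := (ascPochhammer_pos n (p + q) hpq).ne'
  have := (Real.Gamma_pos_of_pos hpq).ne'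
  simp only [beta]
  rw [show p + n + q = p + q + n by ring, Real.Gamma_add_nat_eq_ascPochhammer_mul hp,
    Real.Gamma_add_nat_eq_ascPochhammer_mul hpq]
  field_simp

theorem Real.hasSum_one_sub_rpow_neg {α y : ℝ} (hy : |y| < 1) :
    HasSum (fun n => ordinaryHypergeometricCoefficient α 1 1 n * y ^ n) ((1 - y) ^ (-α)) := by
  have h := (Real.one_add_rpow_hasFPowerSeriesOnBall_zero (a := -α)).hasSum (y := -y)
    (by simpa [← ofReal_norm] using hy)
  rw [binomialSeries_eq_ordinaryHypergeometricSeries (b := (1 : ℝ)) (by intro k; norm_cast),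
    neg_neg, ordinaryHypergeometricSeries, ofScalars_comp_neg_id, zero_add, ← sub_eq_add_neg] at h
  simp only [ofScalars_apply_eq, smul_eq_mul] at h
  refine h.congr_fun fun n => ?_
  have hsq : (-1 : ℝ) ^ n * (-y) ^ n = y ^ n := by rw [← mul_pow, neg_one_mul, neg_neg]
  linear_combination -ordinaryHypergeometricCoefficient α 1 1 n * hsq

theorem beta_mul_ordinaryHypergeometric_eq_integral {α β γ x : ℝ} (hβ : 0 < β) (hγβ : β < γ)
    (hx : |x| < 1) :
    beta β (γ - β) * ₂F₁ α β γ x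
      = ∫ t in (0 : ℝ)..1, t ^ (β - 1) * (1 - t) ^ (γ - β - 1) * (1 - x * t) ^ (-α) := by
  have hγβ' : 0 < γ - β := sub_pos.2 hγβ
  set w : ℝ → ℝ := fun t => t ^ (β - 1) * (1 - t) ^ (γ - β - 1) with hw_def
  set e := ordinaryHypergeometricCoefficient α (1 : ℝ) 1 with he_def
  clear_value e
  have hw_nonneg : ∀ t ∈ uIoc (0 : ℝ) 1, 0 ≤ w t := fun t ht => by
    rw [uIoc_of_le zero_le_one] at ht
    exact mul_nonneg (Real.rpow_nonneg ht.1.le _) (Real.rpow_nonneg (sub_nonneg.2 ht.2) _)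
  have he : Summable fun n => ‖e n‖ * |x| ^ n := by
    have hx' : ‖x‖ₑ < (ofScalars ℝ e).radius := by
      rw [he_def]
      exact enorm_lt_radius_ordinaryHypergeometricSeries hx
    simpa [ofScalars_norm] using (ofScalars ℝ e).summable_norm_mul_pow (r := ‖x‖₊) hx'
  have hterm : ∀ n : ℕ, ∫ t in (0 : ℝ)..1, e n * x ^ n * (t ^ n * w t)
      = beta β (γ - β) * (ordinaryHypergeometricCoefficient α β γ n * x ^ n) := by
    intro n
    have hw_shift : ∫ t in (0 : ℝ)..1, t ^ n * w t = beta (β + n) (γ - β) := by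
      rw [← integral_rpow_mul_one_sub_rpow (by positivity) hγβ']
      refine intervalIntegral.integral_congr_ae (Eventually.of_forall fun t ht => ?_)
      rw [uIoc_of_le zero_le_one] at ht
      rw [hw_def, show β + n - 1 = β - 1 + n by ring, Real.rpow_add ht.1, Real.rpow_natCast]
      ring
    have h1 := ascPochhammer_pos n (1 : ℝ) one_pos
    have hγ := ascPochhammer_pos n γ (hβ.trans hγβ)
    rw [intervalIntegral.integral_const_mul, hw_shift, beta_add_nat hβ hγβ', add_sub_cancel]
    simp only [he_def, ordinaryHypergeometricCoefficient]
    field_simp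
  have hsum := intervalIntegral.hasSum_integral_of_dominated_convergence
    (F := fun n t => e n * x ^ n * (t ^ n * w t))
    (f := fun t => w t * (1 - x * t) ^ (-α))
    (fun n t => ‖e n‖ * |x| ^ n * w t)
    (fun n => by fun_prop)
    (fun n => Eventually.of_forall fun t ht => by
      have h0 := hw_nonneg t ht
      rw [uIoc_of_le zero_le_one] at ht
      rw [norm_mul, norm_mul, norm_mul, norm_pow, Real.norm_eq_abs x, Real.norm_of_nonneg h0,
        norm_pow, Real.norm_of_nonneg ht.1.le]
      gcongr
      exact mul_le_of_le_one_left h0 (pow_le_one₀ ht.1.le ht.2))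
    (Eventually.of_forall fun t _ => he.mul_right _)
    (by simpa only [tsum_mul_right] using
      (intervalIntegrable_rpow_mul_one_sub_rpow hβ hγβ').const_mul _)
    (Eventually.of_forall fun t ht => by
      rw [uIoc_of_le zero_le_one] at ht
      have hxt : |x * t| < 1 := by
        rw [abs_mul, abs_of_pos ht.1]
        exact (mul_le_of_le_one_right (abs_nonneg x) ht.2).trans_lt hx
      refine ((he_def ▸ Real.hasSum_one_sub_rpow_neg hxt).mul_left (w t)).congr_fun fun n => ?_
      simp only [mul_pow]
      ring)
  simp only [hterm] at hsum
  exact ((hasSum_ofScalarsSum (enorm_lt_radius_ordinaryHypergeometricSeries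
    (α := α) (β := β) (γ := γ) hx)).mul_left _).unique hsum

theorem tendsto_ordinaryHypergeometric_nhdsLT_one {α β γ : ℝ} (hα : α ≤ 0) (hβ : 0 < β)
    (hγβ : β < γ) :
    Tendsto (₂F₁ α β γ) (𝓝[<] 1) (𝓝 (beta β (γ - α - β) / beta β (γ - β))) := by
  set w : ℝ → ℝ := fun t => t ^ (β - 1) * (1 - t) ^ (γ - β - 1) with hw_def
  have hw := intervalIntegrable_rpow_mul_one_sub_rpow hβ (sub_pos.2 hγβ)
  have hx01 : ∀ᶠ x in 𝓝[<] (1 : ℝ), x ∈ Ioo 0 1 := Ioo_mem_nhdsLT zero_lt_one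
  have hcont : ∀ t, Continuous fun x : ℝ => (1 - x * t) ^ (-α) := fun t =>
    (Real.continuous_rpow_const (neg_nonneg.2 hα)).comp (by fun_prop)
  have hJ : Tendsto (fun x => ∫ t in (0 : ℝ)..1, w t * (1 - x * t) ^ (-α)) (𝓝[<] 1)
      (𝓝 (∫ t in (0 : ℝ)..1, w t * (1 - 1 * t) ^ (-α))) := by
    refine intervalIntegral.tendsto_integral_filter_of_dominated_convergence w
      (Eventually.of_forall fun x => by fun_prop) ?_ hw
      (Eventually.of_forall fun t _ => ((hcont t).tendsto 1).const_mul _ |>.mono_left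
        nhdsWithin_le_nhds)
    filter_upwards [hx01] with x hx
    refine Eventually.of_forall fun t ht => ?_
    rw [uIoc_of_le zero_le_one] at ht
    have hw0 : 0 ≤ w t :=
      mul_nonneg (Real.rpow_nonneg ht.1.le _) (Real.rpow_nonneg (sub_nonneg.2 ht.2) _)
    have hxt : 0 ≤ 1 - x * t := by linarith [mul_le_of_le_one_right hx.1.le ht.2, hx.2]
    rw [norm_mul, Real.norm_of_nonneg hw0, Real.norm_of_nonneg (Real.rpow_nonneg hxt _)]
    exact mul_le_of_le_one_right hw0
      (Real.rpow_le_one hxt (by nlinarith [hx.1, ht.1]) (neg_nonneg.2 hα))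
  have hJ1 : ∫ t in (0 : ℝ)..1, w t * (1 - 1 * t) ^ (-α) = beta β (γ - α - β) := by
    rw [← integral_rpow_mul_one_sub_rpow hβ (by linarith), intervalIntegral.integral_of_le
      zero_le_one, intervalIntegral.integral_of_le zero_le_one, integral_Ioc_eq_integral_Ioo,
      integral_Ioc_eq_integral_Ioo]
    refine setIntegral_congr_fun measurableSet_Ioo fun t ht => ?_
    rw [hw_def, one_mul, show γ - α - β - 1 = γ - β - 1 + -α by ring,
      Real.rpow_add (sub_pos.2 ht.2)]
    ring
  rw [hJ1] at hJ
  refine (hJ.div_const _).congr' ?_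
  filter_upwards [hx01] with x hx
  rw [← beta_mul_ordinaryHypergeometric_eq_integral hβ hγβ
    (abs_lt.2 ⟨by linarith [hx.1], hx.2⟩)]
  exact mul_div_cancel_left₀ _ (beta_pos hβ (sub_pos.2 hγβ)).ne'

end Euler

theorem ode_rpow_mul_of_hypergeometric_ode {a K u : ℝ} {F φ : ℝ → ℝ}
    (hφ : ∀ v, φ v = K * v ^ a * F v) (hu : 0 < u) (hF : ∀ᶠ v in 𝓝 u, AnalyticAt ℝ F v)
    (hode : u * (1 - u) * deriv (deriv F) u + (4 * a - 2 * u) * deriv F u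
      - 2 * a * (1 - 2 * a) * F u = 0) :
    u ^ 2 * (1 - u) ^ 2 * deriv (deriv φ) u + 2 * u * (a - u + (1 - a) * u ^ 2) * deriv φ u
      - a * (3 * a - 1) * (1 - u) ^ 2 * φ u = 0 := by
  obtain rfl : φ = fun v => K * v ^ a * F v := funext hφ
  have hd1 : ∀ v, 0 < v → AnalyticAt ℝ F v → HasDerivAt (fun v => K * v ^ a * F v)
      (K * (a * v ^ (a - 1) * F v + v ^ a * deriv F v)) v := fun v hv hFv => by
    exact (((Real.hasDerivAt_rpow_const (p := a) (Or.inl hv.ne')).const_mul K).mul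
      hFv.differentiableAt.hasDerivAt).congr_deriv (by ring)
  have hFu := hF.self_of_nhds
  have hev : deriv (fun v => K * v ^ a * F v)
      =ᶠ[𝓝 u] fun v => K * (a * v ^ (a - 1) * F v + v ^ a * deriv F v) := by
    filter_upwards [hF, lt_mem_nhds hu] with v hFv hv using (hd1 v hv hFv).deriv
  have hd2 : HasDerivAt (fun v => K * (a * v ^ (a - 1) * F v + v ^ a * deriv F v))
      (K * (a * (a - 1) * u ^ (a - 1 - 1) * F u + 2 * a * u ^ (a - 1) * deriv F u
        + u ^ a * deriv (deriv F) u)) u :=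
    ((((Real.hasDerivAt_rpow_const (p := a - 1) (Or.inl hu.ne')).const_mul a).mul
      hFu.differentiableAt.hasDerivAt).add ((Real.hasDerivAt_rpow_const (p := a)
      (Or.inl hu.ne')).mul hFu.deriv.differentiableAt.hasDerivAt)).const_mul K |>.congr_deriv
      (by ring)
  rw [hev.deriv_eq, (hd1 u hu hFu).deriv, hd2.deriv]
  rw [Real.rpow_sub_one hu.ne', Real.rpow_sub_one hu.ne']
  field_simp
  linear_combination (K * u ^ a * u * (1 - u)) * hode

theorem tendsto_Gamma_mul_rpow_mul_ordinaryHypergeometric_nhdsLT_one {a : ℝ} (ha : 1 / 2 ≤ a) :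
    Tendsto (fun u : ℝ => Real.Gamma (2 * a) * Real.Gamma (6 * a - 1)
      / (Real.Gamma (4 * a) * Real.Gamma (4 * a - 1)) * u ^ a * ₂F₁ (2 * a) (1 - 2 * a) (4 * a) u)
      (𝓝[<] 1) (𝓝 1) := by
  set K := Real.Gamma (2 * a) * Real.Gamma (6 * a - 1)
    / (Real.Gamma (4 * a) * Real.Gamma (4 * a - 1))
  have hsymm : (₂F₁ (2 * a) (1 - 2 * a) (4 * a) : ℝ → ℝ) = ₂F₁ (1 - 2 * a) (2 * a) (4 * a) := by
    funext u
    simp only [ordinaryHypergeometric, ordinaryHypergeometricSeries_symm]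
  have hF := tendsto_ordinaryHypergeometric_nhdsLT_one (α := 1 - 2 * a) (β := 2 * a)
    (γ := 4 * a) (by linarith) (by linarith) (by linarith)
  have hpow : Tendsto (fun u : ℝ => u ^ a) (𝓝[<] 1) (𝓝 1) := by
    simpa using ((Real.continuousAt_rpow_const 1 a (Or.inl one_ne_zero)).tendsto).mono_left
      nhdsWithin_le_nhds
  have hK : K * (ProbabilityTheory.beta (2 * a) (4 * a - (1 - 2 * a) - 2 * a)
      / ProbabilityTheory.beta (2 * a) (4 * a - 2 * a)) = 1 := by
    simp only [ProbabilityTheory.beta, K]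
    rw [show 4 * a - (1 - 2 * a) - 2 * a = 4 * a - 1 by ring, show 4 * a - 2 * a = 2 * a by ring,
      show 2 * a + (4 * a - 1) = 6 * a - 1 by ring, show 2 * a + 2 * a = 4 * a by ring]
    have h2 := (Real.Gamma_pos_of_pos (by linarith : 0 < 2 * a)).ne'
    have h4 := (Real.Gamma_pos_of_pos (by linarith : 0 < 4 * a)).ne'
    have h41 := (Real.Gamma_pos_of_pos (by linarith : 0 < 4 * a - 1)).ne'
    have h61 := (Real.Gamma_pos_of_pos (by linarith : 0 < 6 * a - 1)).ne'
    generalize Real.Gamma (2 * a) = G2 at *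
    generalize Real.Gamma (4 * a) = G4 at *
    generalize Real.Gamma (4 * a - 1) = G41 at *
    generalize Real.Gamma (6 * a - 1) = G61 at *
    field_simp
  have h := ((tendsto_const_nhds (x := K)).mul hpow).mul hF
  rw [mul_one, hK, ← hsymm] at h
  exact h

/-- For real `a ≥ 1/2`, the function
`φ(u) = [Γ(2a)Γ(6a−1)/(Γ(4a)Γ(4a−1))] · u^a · F(2a, 1−2a, 4a; u)`
(where the hypergeometric series has coefficients built from ascending factorials)
satisfies: (i) the series converges on (0,1); (ii) the ODE
`u²(1−u)²φ'' + 2u(a − u + (1−a)u²)φ' − a(3a−1)(1−u)²φ = 0` on (0,1);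
(iii) `φ(u) → 0` as `u → 0+` and `φ(u) → 1` as `u → 1−`. -/
theorem statement0 (a : ℝ) (ha : 1/2 ≤ a)
    (c : ℕ → ℝ)
    (hc : ∀ n : ℕ, c n =
      ((ascPochhammer ℝ n).eval (2*a) * (ascPochhammer ℝ n).eval (1 - 2*a)) /
        ((ascPochhammer ℝ n).eval (4*a) * (Nat.factorial n : ℝ)))
    (φ : ℝ → ℝ)
    (hφ : ∀ u : ℝ, φ u =
      (Real.Gamma (2*a) * Real.Gamma (6*a - 1) /
        (Real.Gamma (4*a) * Real.Gamma (4*a - 1))) * u ^ a * ∑' n : ℕ, c n * u ^ n) :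
    (∀ u ∈ Set.Ioo (0:ℝ) 1, Summable (fun n : ℕ => c n * u ^ n)) ∧
    (∀ u ∈ Set.Ioo (0:ℝ) 1,
      u^2 * (1-u)^2 * deriv (deriv φ) u
        + 2*u*(a - u + (1-a)*u^2) * deriv φ u
        - a*(3*a-1)*(1-u)^2 * φ u = 0) ∧
    Tendsto φ (nhdsWithin 0 (Set.Ioi 0)) (nhds 0) ∧
    Tendsto φ (nhdsWithin 1 (Set.Iio 1)) (nhds 1) := by
  have ha0 : 0 < a := by linarith
  set K := Real.Gamma (2*a) * Real.Gamma (6*a - 1) / (Real.Gamma (4*a) * Real.Gamma (4*a - 1))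
  set F : ℝ → ℝ := ₂F₁ (2 * a) (1 - 2 * a) (4 * a) with hF_def
  have hcF : c = ordinaryHypergeometricCoefficient (2 * a) (1 - 2 * a) (4 * a) :=
    funext fun n => by rw [hc]; ring
  have hφF : ∀ u, φ u = K * u ^ a * F u := fun u => by
    rw [hφ, hF_def, ordinaryHypergeometric_eq_tsum, hcF]
    simp only [smul_eq_mul]
  have hu1 : ∀ u ∈ Ioo (0 : ℝ) 1, ‖u‖ < 1 := fun u hu => by
    rw [Real.norm_of_nonneg hu.1.le]; exact hu.2
  refine ⟨fun u hu => ?_, fun u hu => ?_, ?_, ?_⟩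
  · rw [hcF]
    exact (hasSum_ofScalarsSum (enorm_lt_radius_ordinaryHypergeometricSeries (hu1 u hu))).summable
  · have hγ : ∀ k : ℕ, (k : ℝ) ≠ -(4 * a) := fun k h => by
      linarith [k.cast_nonneg (α := ℝ)]
    refine ode_rpow_mul_of_hypergeometric_ode hφF hu.1 ?_ ?_
    · filter_upwards [Metric.isOpen_ball.mem_nhds (mem_ball_zero_iff.2 (hu1 u hu))] with v hv
      exact analyticOnNhd_ordinaryHypergeometric v hv
    · linear_combination ordinaryHypergeometric_ode (α := 2 * a) (β := 1 - 2 * a) hγ (hu1 u hu)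
  · have hF0 : ContinuousAt F 0 :=
      (analyticOnNhd_ordinaryHypergeometric 0 (Metric.mem_ball_self one_pos)).continuousAt
    have h := ((tendsto_const_nhds (x := K)).mul
      (Real.continuousAt_rpow_const 0 a (Or.inr ha0.le)).tendsto).mul hF0.tendsto
    rw [Real.zero_rpow ha0.ne', mul_zero, zero_mul] at h
    rw [funext hφF]
    exact h.mono_left nhdsWithin_le_nhds
  · rw [funext hφF]
    exact tendsto_Gamma_mul_rpow_mul_ordinaryHypergeometric_nhdsLT_one ha
end

section
/- Let a ∈ ℝ and b = (3a−1)/2. Let φ : (0,1) → ℝ be twice continuously differentiable and define H(x,y) = φ(x/y) for 0 < x < y. Then H satisfies the partial differential equation −ab(1/x − 1/y)² H + (a/x) ∂ₓH + (a/y) ∂_yH + (1/2) ∂ₓₓH + (1/2) ∂_yyH + ∂ₓ_yH = 0 at every point (x,y) with 0 < x < y if and only if φ satisfies the ordinary differential equation u²(1−u)²φ''(u) + 2u(a − u + (1−a)u²)φ'(u) − a(3a−1)(1−u)²φ(u) = 0 at every u ∈ (0,1). -/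
open Set Filter Topology

/-! With `u = x / y`, every partial derivative of `H(x, y) = φ(x / y)` up to order two is a
combination of `φ(u)`, `φ'(u)`, `φ''(u)` with coefficients rational in `x, y`; substituting them,
the left-hand side of the PDE becomes `1 / (2x²)` times the left-hand side of the ODE at `u`.
Since every `u ∈ (0, 1)` is the ratio `u / 1` of a point of the wedge, the two equations are
equivalent. -/

lemma HasDerivAt.comp_div_const {f : ℝ → ℝ} {f' x y : ℝ} (hf : HasDerivAt f f' (x / y)) :
    HasDerivAt (fun s => f (s / y)) (f' / y) x :=
  (hf.comp x ((hasDerivAt_id x).div_const y)).congr_deriv (by ring)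

lemma HasDerivAt.comp_const_div {f : ℝ → ℝ} {f' x y : ℝ} (hy : y ≠ 0)
    (hf : HasDerivAt f f' (x / y)) :
    HasDerivAt (fun t => f (x / t)) (-(x * f') / y ^ 2) y := by
  have hinv : HasDerivAt (fun t : ℝ => x / t) (-x / y ^ 2) y := by
    simpa [div_eq_mul_inv, neg_div] using (hasDerivAt_inv hy).const_mul x
  exact (hf.comp y hinv).congr_deriv (by ring)

lemma div_mem_Ioo_zero_one {x y : ℝ} (hx : 0 < x) (hxy : x < y) : x / y ∈ Ioo (0 : ℝ) 1 :=
  ⟨div_pos hx (hx.trans hxy), (div_lt_one (hx.trans hxy)).2 hxy⟩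

section Wedge

variable {φ φ' φ'' : ℝ → ℝ} {x y : ℝ}

lemma deriv_comp_div_fst (hφ' : ∀ u ∈ Ioo (0 : ℝ) 1, HasDerivAt φ (φ' u) u)
    (hx : 0 < x) (hxy : x < y) :
    deriv (fun s => φ (s / y)) x = φ' (x / y) / y :=
  (hφ' _ (div_mem_Ioo_zero_one hx hxy)).comp_div_const.deriv

lemma deriv_comp_div_snd (hφ' : ∀ u ∈ Ioo (0 : ℝ) 1, HasDerivAt φ (φ' u) u)
    (hx : 0 < x) (hxy : x < y) :
    deriv (fun t => φ (x / t)) y = -(x * φ' (x / y)) / y ^ 2 :=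
  ((hφ' _ (div_mem_Ioo_zero_one hx hxy)).comp_const_div (hx.trans hxy).ne').deriv

lemma deriv_deriv_comp_div_fst_fst (hφ' : ∀ u ∈ Ioo (0 : ℝ) 1, HasDerivAt φ (φ' u) u)
    (hφ'' : HasDerivAt φ' (φ'' (x / y)) (x / y)) (hx : 0 < x) (hxy : x < y) :
    deriv (fun s => deriv (fun s' => φ (s' / y)) s) x = φ'' (x / y) / y ^ 2 := by
  have hev : (fun s => deriv (fun s' => φ (s' / y)) s) =ᶠ[𝓝 x] fun s => φ' (s / y) / y := by
    filter_upwards [Ioo_mem_nhds hx hxy] with s hs using deriv_comp_div_fst hφ' hs.1 hs.2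
  rw [hev.deriv_eq, (hφ''.comp_div_const.div_const y).deriv, div_div, sq]

lemma deriv_deriv_comp_div_snd_snd (hφ' : ∀ u ∈ Ioo (0 : ℝ) 1, HasDerivAt φ (φ' u) u)
    (hφ'' : HasDerivAt φ' (φ'' (x / y)) (x / y)) (hx : 0 < x) (hxy : x < y) :
    deriv (fun t => deriv (fun t' => φ (x / t')) t) y
      = (x ^ 2 * φ'' (x / y) + 2 * x * y * φ' (x / y)) / y ^ 4 := by
  have hy : y ≠ 0 := (hx.trans hxy).ne'
  have hev : (fun t => deriv (fun t' => φ (x / t')) t) =ᶠ[𝓝 y]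
      fun t => -(x * φ' (x / t)) / t ^ 2 := by
    filter_upwards [Ioi_mem_nhds hxy] with t ht using deriv_comp_div_snd hφ' hx ht
  have hsq : HasDerivAt (fun t : ℝ => t ^ 2) (2 * y) y := by
    simpa using hasDerivAt_pow 2 y
  have hder := ((hφ''.comp_const_div hy).const_mul x).neg.div hsq (pow_ne_zero 2 hy)
  rw [hev.deriv_eq]
  exact (hder.congr_deriv (by simp only [Pi.neg_apply]; field_simp; ring)).deriv

lemma deriv_deriv_comp_div_fst_snd (hφ' : ∀ u ∈ Ioo (0 : ℝ) 1, HasDerivAt φ (φ' u) u)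
    (hφ'' : HasDerivAt φ' (φ'' (x / y)) (x / y)) (hx : 0 < x) (hxy : x < y) :
    deriv (fun t => deriv (fun s => φ (s / t)) x) y
      = -(x * φ'' (x / y) + y * φ' (x / y)) / y ^ 3 := by
  have hy : y ≠ 0 := (hx.trans hxy).ne'
  have hev : (fun t => deriv (fun s => φ (s / t)) x) =ᶠ[𝓝 y] fun t => φ' (x / t) / t := by
    filter_upwards [Ioi_mem_nhds hxy] with t ht using deriv_comp_div_fst hφ' hx ht
  rw [hev.deriv_eq]
  have hder := (hφ''.comp_const_div hy).div (hasDerivAt_id y) hy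
  exact (hder.congr_deriv (by simp only [id]; field_simp; ring)).deriv

end Wedge

lemma pde_combination_eq_ode_combination {a x y : ℝ} (hx : x ≠ 0) (hy : y ≠ 0) (p p' p'' : ℝ) :
    -(a * ((3 * a - 1) / 2)) * (1 / x - 1 / y) ^ 2 * p + a / x * (p' / y)
        + a / y * (-(x * p') / y ^ 2) + 1 / 2 * (p'' / y ^ 2)
        + 1 / 2 * ((x ^ 2 * p'' + 2 * x * y * p') / y ^ 4) + -(x * p'' + y * p') / y ^ 3
      = 1 / (2 * x ^ 2) * ((x / y) ^ 2 * (1 - x / y) ^ 2 * p''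
          + 2 * (x / y) * (a - x / y + (1 - a) * (x / y) ^ 2) * p'
          - a * (3 * a - 1) * (1 - x / y) ^ 2 * p) := by
  field_simp
  ring

theorem statement1_general (a b : ℝ) (hb : b = (3*a - 1)/2)
    (φ φ' φ'' : ℝ → ℝ)
    (hφ' : ∀ u ∈ Set.Ioo (0:ℝ) 1, HasDerivAt φ (φ' u) u)
    (hφ'' : ∀ u ∈ Set.Ioo (0:ℝ) 1, HasDerivAt φ' (φ'' u) u)
    (H Hx Hy Hxx Hyy Hxy : ℝ → ℝ → ℝ)
    (hH : ∀ x y : ℝ, H x y = φ (x / y))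
    (hHx : ∀ x y : ℝ, Hx x y = deriv (fun s => H s y) x)
    (hHy : ∀ x y : ℝ, Hy x y = deriv (fun t => H x t) y)
    (hHxx : ∀ x y : ℝ, Hxx x y = deriv (fun s => Hx s y) x)
    (hHyy : ∀ x y : ℝ, Hyy x y = deriv (fun t => Hy x t) y)
    (hHxy : ∀ x y : ℝ, Hxy x y = deriv (fun t => Hx x t) y) :
    (∀ x y : ℝ, 0 < x → x < y →
        -(a*b) * (1/x - 1/y)^2 * H x y + (a/x) * Hx x y + (a/y) * Hy x y
          + (1/2) * Hxx x y + (1/2) * Hyy x y + Hxy x y = 0)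
      ↔ (∀ u ∈ Set.Ioo (0:ℝ) 1,
          u^2 * (1-u)^2 * φ'' u + 2*u*(a - u + (1-a)*u^2) * φ' u
            - a*(3*a-1)*(1-u)^2 * φ u = 0) := by
  have key : ∀ x y : ℝ, 0 < x → x < y →
      -(a*b) * (1/x - 1/y)^2 * H x y + (a/x) * Hx x y + (a/y) * Hy x y
          + (1/2) * Hxx x y + (1/2) * Hyy x y + Hxy x y
        = 1 / (2 * x ^ 2) * ((x / y) ^ 2 * (1 - x / y) ^ 2 * φ'' (x / y)
          + 2 * (x / y) * (a - x / y + (1 - a) * (x / y) ^ 2) * φ' (x / y)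
          - a * (3 * a - 1) * (1 - x / y) ^ 2 * φ (x / y)) := by
    intro x y hx hxy
    have hφ''xy := hφ'' _ (div_mem_Ioo_zero_one hx hxy)
    simp only [hHxx, hHyy, hHxy, hHx, hHy, hH]
    rw [deriv_comp_div_fst hφ' hx hxy, deriv_comp_div_snd hφ' hx hxy,
      deriv_deriv_comp_div_fst_fst hφ' hφ''xy hx hxy,
      deriv_deriv_comp_div_snd_snd hφ' hφ''xy hx hxy,
      deriv_deriv_comp_div_fst_snd hφ' hφ''xy hx hxy, hb]
    exact pde_combination_eq_ode_combination hx.ne' (hx.trans hxy).ne' _ _ _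
  constructor
  · intro hpde u ⟨hu0, hu1⟩
    have hode := hpde u 1 hu0 hu1
    rw [key u 1 hu0 hu1, div_one] at hode
    exact (mul_eq_zero.1 hode).resolve_left (by positivity)
  · intro hode x y hx hxy
    rw [key x y hx hxy, hode _ (div_mem_Ioo_zero_one hx hxy), mul_zero]

/-- With `b = (3a−1)/2` and `φ` twice continuously differentiable on `(0,1)`,
the function `H(x,y) = φ(x/y)` satisfies the PDE
`−ab(1/x − 1/y)² H + (a/x)∂ₓH + (a/y)∂_yH + ½∂ₓₓH + ½∂_yyH + ∂ₓ_yH = 0`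
on `{0 < x < y}` if and only if `φ` satisfies the ODE
`u²(1−u)²φ'' + 2u(a − u + (1−a)u²)φ' − a(3a−1)(1−u)²φ = 0` on `(0,1)`. -/
theorem statement1 (a b : ℝ) (hb : b = (3*a - 1)/2)
    (φ φ' φ'' : ℝ → ℝ)
    (hφ' : ∀ u ∈ Set.Ioo (0:ℝ) 1, HasDerivAt φ (φ' u) u)
    (hφ'' : ∀ u ∈ Set.Ioo (0:ℝ) 1, HasDerivAt φ' (φ'' u) u)
    (hφ''cont : ContinuousOn φ'' (Set.Ioo (0:ℝ) 1))
    (H Hx Hy Hxx Hyy Hxy : ℝ → ℝ → ℝ)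
    (hH : ∀ x y : ℝ, H x y = φ (x / y))
    (hHx : ∀ x y : ℝ, Hx x y = deriv (fun s => H s y) x)
    (hHy : ∀ x y : ℝ, Hy x y = deriv (fun t => H x t) y)
    (hHxx : ∀ x y : ℝ, Hxx x y = deriv (fun s => Hx s y) x)
    (hHyy : ∀ x y : ℝ, Hyy x y = deriv (fun t => Hy x t) y)
    (hHxy : ∀ x y : ℝ, Hxy x y = deriv (fun t => Hx x t) y) :
    (∀ x y : ℝ, 0 < x → x < y →
        -(a*b) * (1/x - 1/y)^2 * H x y + (a/x) * Hx x y + (a/y) * Hy x y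
          + (1/2) * Hxx x y + (1/2) * Hyy x y + Hxy x y = 0)
      ↔ (∀ u ∈ Set.Ioo (0:ℝ) 1,
          u^2 * (1-u)^2 * φ'' u + 2*u*(a - u + (1-a)*u^2) * φ' u
            - a*(3*a-1)*(1-u)^2 * φ u = 0) :=
  statement1_general a b hb φ φ' φ'' hφ' hφ'' H Hx Hy Hxx Hyy Hxy hH hHx hHy hHxx hHyy hHxy
end

section
/- Let a ∈ ℝ. Let φ : (0,1) → ℝ be twice differentiable and define ψ : (0,1) → ℝ by ψ(u) = u^{−a}(1−u)^{1−4a}φ(u). Then φ satisfies the ordinary differential equation u²(1−u)²φ''(u) + 2u(a − u + (1−a)u²)φ'(u) − a(3a−1)(1−u)²φ(u) = 0 on (0,1) if and only if ψ satisfies the hypergeometric differential equation u(1−u)ψ''(u) + (4a − 8au)ψ'(u) − 2a(6a−1)ψ(u) = 0 on (0,1). -/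
/-!
Write `ψ = W φ` with `W u = u^(-a) (1-u)^(1-4a)`, whose logarithmic derivative is
`g u = -a/u - (1-4a)/(1-u)`. Then `ψ' = W (g φ + φ')` and `ψ'' = W ((g² + g') φ + 2 g φ' + φ'')`,
and substituting these into the hypergeometric operator gives exactly `W / (u (1-u))` times the
operator of the `φ`-equation. The factor `W / (u (1-u))` is positive on `(0,1)`, so the two
equations hold at the same points.
-/

open Set Filter

theorem hasDerivAt_rpow_mul_one_sub_rpow (p q : ℝ) {u : ℝ} (hu : u ∈ Ioo (0 : ℝ) 1) :
    HasDerivAt (fun x => x ^ p * (1 - x) ^ q)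
      (u ^ p * (1 - u) ^ q * (p / u - q / (1 - u))) u := by
  have hu0 : 0 < u := hu.1
  have hu1 : 0 < 1 - u := sub_pos.mpr hu.2
  have hsub : HasDerivAt (fun x : ℝ => 1 - x) (-1) u := by
    simpa using (hasDerivAt_id u).const_sub 1
  refine ((Real.hasDerivAt_rpow_const (Or.inl hu0.ne')).mul
    (hsub.rpow_const (Or.inl hu1.ne'))).congr_deriv ?_
  rw [Real.rpow_sub hu0, Real.rpow_sub hu1, Real.rpow_one, Real.rpow_one]
  field_simp
  ring

theorem hasDerivAt_div_sub_div_one_sub (p q : ℝ) {u : ℝ} (hu0 : u ≠ 0) (hu1 : 1 - u ≠ 0) :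
    HasDerivAt (fun x => p / x - q / (1 - x)) (-p / u ^ 2 - q / (1 - u) ^ 2) u := by
  have hsub : HasDerivAt (fun x : ℝ => 1 - x) (-1) u := by
    simpa using (hasDerivAt_id u).const_sub 1
  refine (((hasDerivAt_inv hu0).const_mul p).sub
    ((hsub.inv hu1).const_mul q)).congr_deriv ?_
  ring

theorem deriv_mul_of_hasDerivAt_logDeriv {s : Set ℝ} {W g g' φ φ' φ'' : ℝ → ℝ}
    (hs : IsOpen s) (hW : ∀ u ∈ s, HasDerivAt W (W u * g u) u)
    (hg : ∀ u ∈ s, HasDerivAt g (g' u) u) (hφ' : ∀ u ∈ s, HasDerivAt φ (φ' u) u)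
    (hφ'' : ∀ u ∈ s, HasDerivAt φ' (φ'' u) u) {u : ℝ} (hu : u ∈ s) :
    deriv (fun x => W x * φ x) u = W u * (g u * φ u + φ' u) ∧
      deriv (deriv fun x => W x * φ x) u =
        W u * ((g u ^ 2 + g' u) * φ u + 2 * g u * φ' u + φ'' u) := by
  have hfirst : ∀ x ∈ s, deriv (fun x => W x * φ x) x = W x * (g x * φ x + φ' x) := fun x hx =>
    (((hW x hx).mul (hφ' x hx)).congr_deriv (by ring)).deriv
  refine ⟨hfirst u hu, ?_⟩
  rw [(eventuallyEq_of_mem (hs.mem_nhds hu) hfirst).deriv_eq]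
  exact (((hW u hu).mul (((hg u hu).mul (hφ' u hu)).add (hφ'' u hu))).congr_deriv
    (by simp only [Pi.add_apply, Pi.mul_apply]; ring)).deriv

theorem hypergeometric_operator_eq_div {a u g g' φ₀ φ₁ φ₂ : ℝ} (hu0 : u ≠ 0) (hu1 : 1 - u ≠ 0)
    (hg : g = -a / u - (1 - 4 * a) / (1 - u))
    (hg' : g' = -(-a) / u ^ 2 - (1 - 4 * a) / (1 - u) ^ 2) :
    u * (1 - u) * ((g ^ 2 + g') * φ₀ + 2 * g * φ₁ + φ₂) + (4 * a - 8 * a * u) * (g * φ₀ + φ₁)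
        - 2 * a * (6 * a - 1) * φ₀ =
      (u ^ 2 * (1 - u) ^ 2 * φ₂ + 2 * u * (a - u + (1 - a) * u ^ 2) * φ₁
        - a * (3 * a - 1) * (1 - u) ^ 2 * φ₀) / (u * (1 - u)) := by
  subst hg hg'
  field_simp
  ring

/-- For `φ` twice differentiable on `(0,1)` and
`ψ(u) = u^{−a}(1−u)^{1−4a}φ(u)`, the function `φ` satisfies
`u²(1−u)²φ'' + 2u(a − u + (1−a)u²)φ' − a(3a−1)(1−u)²φ = 0` on `(0,1)`
if and only if `ψ` satisfies the hypergeometric equation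
`u(1−u)ψ'' + (4a − 8au)ψ' − 2a(6a−1)ψ = 0` on `(0,1)`. -/
theorem statement2 (a : ℝ)
    (φ φ' φ'' ψ : ℝ → ℝ)
    (hφ' : ∀ u ∈ Set.Ioo (0:ℝ) 1, HasDerivAt φ (φ' u) u)
    (hφ'' : ∀ u ∈ Set.Ioo (0:ℝ) 1, HasDerivAt φ' (φ'' u) u)
    (hψ : ∀ u : ℝ, ψ u = u ^ (-a) * (1 - u) ^ (1 - 4*a) * φ u) :
    (∀ u ∈ Set.Ioo (0:ℝ) 1,
        u^2 * (1-u)^2 * φ'' u + 2*u*(a - u + (1-a)*u^2) * φ' u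
          - a*(3*a-1)*(1-u)^2 * φ u = 0)
      ↔ (∀ u ∈ Set.Ioo (0:ℝ) 1,
          u * (1-u) * deriv (deriv ψ) u + (4*a - 8*a*u) * deriv ψ u
            - 2*a*(6*a-1) * ψ u = 0) := by
  obtain rfl : ψ = fun u => u ^ (-a) * (1 - u) ^ (1 - 4*a) * φ u := funext hψ
  refine forall₂_congr fun u hu => ?_
  have hu0 : 0 < u := hu.1
  have hu1 : 0 < 1 - u := sub_pos.mpr hu.2
  obtain ⟨hd1, hd2⟩ := deriv_mul_of_hasDerivAt_logDeriv isOpen_Ioo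
    (fun x hx => hasDerivAt_rpow_mul_one_sub_rpow (-a) (1 - 4*a) hx)
    (fun x hx => hasDerivAt_div_sub_div_one_sub (-a) (1 - 4*a) hx.1.ne' (sub_pos.mpr hx.2).ne')
    hφ' hφ'' hu
  have hW : 0 < u ^ (-a) * (1 - u) ^ (1 - 4*a) / (u * (1 - u)) := by positivity
  rw [hd1, hd2]
  refine (mul_eq_zero.trans (or_iff_right hW.ne')).symm.trans (Eq.congr_left ?_)
  rw [div_mul_eq_mul_div, mul_div_assoc, ← hypergeometric_operator_eq_div hu0.ne' hu1.ne' rfl rfl]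
  ring
end

section
/- Let a ≥ 1/2 be real. Then the series Σ_{n=0}^∞ [(2a)_n (1−2a)_n / ((4a)_n n!)] converges and its sum equals Γ(4a)Γ(4a−1)/(Γ(2a)Γ(6a−1)). (This is Gauss's evaluation F(2a, 1−2a, 4a; 1) = Γ(4a)Γ(4a−1)/(Γ(2a)Γ(6a−1)).) -/
/-!
Gauss's summation `₂F₁(a, b; c; 1) = Γ(c)Γ(c-a-b)/(Γ(c-a)Γ(c-b))` via Euler's integral.
The beta integral gives `(a)ₙ/(c)ₙ = Γ(c)/(Γ(a)Γ(c-a)) ∫₀¹ t^(a+n-1)(1-t)^(c-a-1) dt`;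
summing the binomial series `∑ (b)ₙ tⁿ/n! = (1-t)^(-b)` under the integral leaves the beta
integral `B(a, c-a-b)`. The interchange is monotone convergence, since `(b)ₙ` has constant sign
for large `n`. The theorem is the case `(a, b, c) = (2a, 1-2a, 4a)`.
-/

open Set Filter Polynomial MeasureTheory

lemma ascPochhammer_eval_add_nat {S : Type*} [CommSemiring S] (a : S) (n k : ℕ) :
    (ascPochhammer S (n + k)).eval a =
      (ascPochhammer S n).eval a * (ascPochhammer S k).eval (a + n) := by
  simp [← ascPochhammer_mul]

lemma ascPochhammer_eval_eventually_nonneg_or_nonpos (a : ℝ) :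
    (∀ᶠ n in atTop, 0 ≤ (ascPochhammer ℝ n).eval a) ∨
      ∀ᶠ n in atTop, (ascPochhammer ℝ n).eval a ≤ 0 := by
  obtain ⟨N, hN⟩ := exists_nat_gt (-a)
  have htail (n : ℕ) (hn : N ≤ n) : (ascPochhammer ℝ n).eval a =
      (ascPochhammer ℝ N).eval a * (ascPochhammer ℝ (n - N)).eval (a + N) := by
    rw [← ascPochhammer_eval_add_nat, Nat.add_sub_cancel' hn]
  have hpos (k : ℕ) : 0 < (ascPochhammer ℝ k).eval (a + N) :=
    ascPochhammer_pos k _ (by linarith)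
  rcases le_total 0 ((ascPochhammer ℝ N).eval a) with h | h
  · exact .inl <| eventually_atTop.2
      ⟨N, fun n hn => htail n hn ▸ mul_nonneg h (hpos _).le⟩
  · exact .inr <| eventually_atTop.2
      ⟨N, fun n hn => htail n hn ▸ mul_nonpos_of_nonpos_of_nonneg h (hpos _).le⟩

lemma Real.Gamma_add_nat_eq_mul_ascPochhammer {x : ℝ} (hx : 0 < x) (n : ℕ) :
    Gamma (x + n) = Gamma x * (ascPochhammer ℝ n).eval x := by
  induction n with
  | zero => simp
  | succ n ih =>
    rw [Nat.cast_succ, ← add_assoc, Gamma_add_one (by positivity), ih, ascPochhammer_succ_eval]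
    ring

lemma integral_rpow_mul_one_sub_rpow_s5 {x y : ℝ} (hx : 0 < x) (hy : 0 < y) :
    ∫ t in Ioo (0 : ℝ) 1, t ^ (x - 1) * (1 - t) ^ (y - 1) =
      Real.Gamma x * Real.Gamma y / Real.Gamma (x + y) := by
  have h := Complex.betaIntegral_eq_Gamma_mul_div x y (by simpa) (by simpa)
  rw [Complex.betaIntegral, intervalIntegral.integral_of_le zero_le_one,
    integral_Ioc_eq_integral_Ioo] at h
  apply Complex.ofReal_injective
  rw [Complex.ofReal_div, Complex.ofReal_mul, ← Complex.Gamma_ofReal, ← Complex.Gamma_ofReal,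
    ← Complex.Gamma_ofReal, Complex.ofReal_add, ← h, ← integral_complex_ofReal]
  refine setIntegral_congr_fun measurableSet_Ioo fun t ht => ?_
  norm_cast
  rw [Complex.ofReal_mul, Complex.ofReal_cpow ht.1.le, Complex.ofReal_cpow (sub_nonneg.2 ht.2.le)]

lemma integrableOn_rpow_mul_one_sub_rpow {x y : ℝ} (hx : 0 < x) (hy : 0 < y) :
    IntegrableOn (fun t : ℝ => t ^ (x - 1) * (1 - t) ^ (y - 1)) (Ioo 0 1) :=
  .of_integral_ne_zero <| by
    rw [integral_rpow_mul_one_sub_rpow_s5 hx hy]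
    exact (div_pos (mul_pos (Real.Gamma_pos_of_pos hx) (Real.Gamma_pos_of_pos hy))
      (Real.Gamma_pos_of_pos (add_pos hx hy))).ne'

lemma Ring.choose_add_sub_one_eq_ascPochhammer_div {K : Type*} [Field K] [CharZero K]
    (a : K) (n : ℕ) :
    Ring.choose (a + n - 1) n = (ascPochhammer K n).eval a / n.factorial := by
  rw [Ring.choose_eq_smul, descPochhammer_smeval_eq_ascPochhammer,
    ascPochhammer_smeval_eq_eval, smul_eq_mul, inv_mul_eq_div]
  ring_nf

lemma hasSum_ascPochhammer_div_factorial_mul_pow (a : ℝ) {t : ℝ} (ht : |t| < 1) :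
    HasSum (fun n : ℕ => (ascPochhammer ℝ n).eval a / n.factorial * t ^ n)
      ((1 - t) ^ (-a)) := by
  have h := (Real.one_div_one_sub_rpow_hasFPowerSeriesOnBall_zero a).hasSum
    (y := t) (by simpa [Metric.mem_eball, edist_dist] using ht)
  simp only [FormalMultilinearSeries.ofScalars_apply_eq,
    Ring.choose_add_sub_one_eq_ascPochhammer_div, smul_eq_mul, zero_add, one_div] at h
  rwa [Real.rpow_neg (by linarith [le_abs_self t])]

lemma hasSum_ascPochhammer_div_factorial_mul_rpow (a b c : ℝ) {t : ℝ}
    (ht : t ∈ Ioo (0 : ℝ) 1) :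
    HasSum (fun n : ℕ => (ascPochhammer ℝ n).eval b / n.factorial *
        (t ^ (a + n - 1) * (1 - t) ^ (c - a - 1)))
      (t ^ (a - 1) * (1 - t) ^ (c - a - b - 1)) := by
  have h := (hasSum_ascPochhammer_div_factorial_mul_pow b
    (abs_lt.2 ⟨by linarith [ht.1], ht.2⟩)).mul_left (t ^ (a - 1) * (1 - t) ^ (c - a - 1))
  rw [mul_assoc, ← Real.rpow_add (sub_pos.2 ht.2), show c - a - 1 + -b = c - a - b - 1 by ring]
    at h
  refine h.congr_fun fun n => ?_
  rw [add_sub_right_comm, Real.rpow_add ht.1, Real.rpow_natCast]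
  ring

section IntegralTsum

variable {α : Type*} [MeasurableSpace α] {μ : Measure α} {f : ℕ → α → ℝ}
  {F : α → ℝ}

lemma hasSum_integral_of_nonneg (hf : ∀ n, Integrable (f n) μ) (hF : Integrable F μ)
    (hnn : ∀ n, 0 ≤ᵐ[μ] f n) (hsum : ∀ᵐ x ∂μ, HasSum (fun n => f n x) (F x)) :
    HasSum (fun n => ∫ x, f n x ∂μ) (∫ x, F x ∂μ) := by
  rw [hasSum_iff_tendsto_nat_of_nonneg (fun n => integral_nonneg_of_ae (hnn n))]
  have hmono : ∀ᵐ x ∂μ, Monotone fun N => ∑ n ∈ Finset.range N, f n x := by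
    filter_upwards [ae_all_iff.2 hnn] with x hx
    exact monotone_nat_of_le_succ fun N => by simpa [Finset.sum_range_succ] using hx N
  have := integral_tendsto_of_tendsto_of_monotone
    (fun N => integrable_finsetSum _ fun n _ => hf n) hF hmono
    (by filter_upwards [hsum] with x hx using hx.tendsto_sum_nat)
  simpa [integral_finsetSum _ fun n _ => hf n] using this

lemma hasSum_integral_of_eventually_nonneg (hf : ∀ n, Integrable (f n) μ)
    (hF : Integrable F μ) (hnn : ∀ᶠ n in atTop, 0 ≤ᵐ[μ] f n)
    (hsum : ∀ᵐ x ∂μ, HasSum (fun n => f n x) (F x)) :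
    HasSum (fun n => ∫ x, f n x ∂μ) (∫ x, F x ∂μ) := by
  obtain ⟨N, hN⟩ := eventually_atTop.1 hnn
  have hhead : Integrable (fun x => ∑ n ∈ Finset.range N, f n x) μ :=
    integrable_finsetSum _ fun n _ => hf n
  rw [← hasSum_nat_add_iff' N, ← integral_finsetSum _ fun n _ => hf n,
    ← integral_sub hF hhead]
  refine hasSum_integral_of_nonneg (fun n => hf _) (hF.sub hhead) (fun n => hN _ (by omega)) ?_
  filter_upwards [hsum] with x hx
  simpa using (hasSum_nat_add_iff' N).2 hx

lemma hasSum_integral_of_eventually_nonneg_or_nonpos (hf : ∀ n, Integrable (f n) μ)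
    (hF : Integrable F μ)
    (hsign : (∀ᶠ n in atTop, 0 ≤ᵐ[μ] f n) ∨ ∀ᶠ n in atTop, f n ≤ᵐ[μ] 0)
    (hsum : ∀ᵐ x ∂μ, HasSum (fun n => f n x) (F x)) :
    HasSum (fun n => ∫ x, f n x ∂μ) (∫ x, F x ∂μ) := by
  rcases hsign with hnn | hnp
  · exact hasSum_integral_of_eventually_nonneg hf hF hnn hsum
  · have := hasSum_integral_of_eventually_nonneg (f := -f) (F := -F) (fun n => (hf n).neg)
      hF.neg (hnp.mono fun n hn => by filter_upwards [hn] with x hx using by simpa using hx)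
      (by filter_upwards [hsum] with x hx using hx.neg)
    simpa [integral_neg] using this.neg

end IntegralTsum

theorem hasSum_gauss_hypergeometric_one {a b c : ℝ} (ha : 0 < a) (hac : a < c)
    (habc : a + b < c) :
    HasSum (fun n : ℕ => ((ascPochhammer ℝ n).eval a * (ascPochhammer ℝ n).eval b) /
        ((ascPochhammer ℝ n).eval c * (n.factorial : ℝ)))
      (Real.Gamma c * Real.Gamma (c - a - b) / (Real.Gamma (c - a) * Real.Gamma (c - b))) := by
  have hc : 0 < c := ha.trans hac
  have hca : 0 < c - a := sub_pos.2 hac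
  have hcab : 0 < c - a - b := by linarith
  set g : ℕ → ℝ → ℝ := fun n t =>
    (ascPochhammer ℝ n).eval b / n.factorial * (t ^ (a + n - 1) * (1 - t) ^ (c - a - 1))
  have hg_integral (n : ℕ) : ∫ t in Ioo 0 1, g n t =
      (ascPochhammer ℝ n).eval b / n.factorial *
        (Real.Gamma a * (ascPochhammer ℝ n).eval a * Real.Gamma (c - a) /
          (Real.Gamma c * (ascPochhammer ℝ n).eval c)) := by
    rw [integral_const_mul, integral_rpow_mul_one_sub_rpow_s5 (by positivity) hca,
      show a + n + (c - a) = c + n by ring, Real.Gamma_add_nat_eq_mul_ascPochhammer ha,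
      Real.Gamma_add_nat_eq_mul_ascPochhammer hc]
  have hsign : (∀ᶠ n in atTop, 0 ≤ᵐ[volume.restrict (Ioo 0 1)] g n) ∨
      ∀ᶠ n in atTop, g n ≤ᵐ[volume.restrict (Ioo 0 1)] 0 := by
    have hpos (n : ℕ) : ∀ᵐ t : ℝ ∂volume.restrict (Ioo (0 : ℝ) 1),
        0 ≤ t ^ (a + n - 1) * (1 - t) ^ (c - a - 1) :=
      ae_restrict_of_forall_mem measurableSet_Ioo fun t ht =>
        mul_nonneg (Real.rpow_nonneg ht.1.le _) (Real.rpow_nonneg (sub_nonneg.2 ht.2.le) _)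
    refine (ascPochhammer_eval_eventually_nonneg_or_nonpos b).imp
      (fun h => h.mono fun n hn => (hpos n).mono fun t ht => ?_)
      (fun h => h.mono fun n hn => (hpos n).mono fun t ht => ?_)
    · exact mul_nonneg (div_nonneg hn n.factorial.cast_nonneg) ht
    · exact mul_nonpos_of_nonpos_of_nonneg
        (div_nonpos_of_nonpos_of_nonneg hn n.factorial.cast_nonneg) ht
  have hsum := hasSum_integral_of_eventually_nonneg_or_nonpos
    (fun n => (integrableOn_rpow_mul_one_sub_rpow (by positivity) hca).const_mul _)
    (integrableOn_rpow_mul_one_sub_rpow ha hcab) hsign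
    (ae_restrict_of_forall_mem measurableSet_Ioo fun t ht =>
      hasSum_ascPochhammer_div_factorial_mul_rpow a b c ht)
  rw [integral_rpow_mul_one_sub_rpow_s5 ha hcab, show a + (c - a - b) = c - b by ring] at hsum
  have hΓa := Real.Gamma_pos_of_pos ha
  have hΓca := Real.Gamma_pos_of_pos hca
  rw [show Real.Gamma c * Real.Gamma (c - a - b) / (Real.Gamma (c - a) * Real.Gamma (c - b)) =
      Real.Gamma c / (Real.Gamma a * Real.Gamma (c - a)) *
        (Real.Gamma a * Real.Gamma (c - a - b) / Real.Gamma (c - b)) by field_simp]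
  refine (hsum.mul_left _).congr_fun fun n => ?_
  rw [hg_integral]
  have := ascPochhammer_pos n c hc
  field_simp

/-- Gauss's evaluation: For real `a ≥ 1/2`,
`F(2a, 1−2a, 4a; 1) = Γ(4a)Γ(4a−1)/(Γ(2a)Γ(6a−1))`, the series converging. -/
theorem statement5 (a : ℝ) (ha : 1/2 ≤ a) :
    Summable (fun n : ℕ =>
      ((ascPochhammer ℝ n).eval (2*a) * (ascPochhammer ℝ n).eval (1 - 2*a)) /
        ((ascPochhammer ℝ n).eval (4*a) * (Nat.factorial n : ℝ))) ∧
    (∑' n : ℕ,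
      ((ascPochhammer ℝ n).eval (2*a) * (ascPochhammer ℝ n).eval (1 - 2*a)) /
        ((ascPochhammer ℝ n).eval (4*a) * (Nat.factorial n : ℝ)))
      = Real.Gamma (4*a) * Real.Gamma (4*a - 1) /
          (Real.Gamma (2*a) * Real.Gamma (6*a - 1)) := by
  have h := hasSum_gauss_hypergeometric_one (a := 2 * a) (b := 1 - 2 * a) (c := 4 * a)
    (by linarith) (by linarith) (by linarith)
  rw [show 4 * a - 2 * a - (1 - 2 * a) = 4 * a - 1 by ring, show 4 * a - 2 * a = 2 * a by ring,
    show 4 * a - (1 - 2 * a) = 6 * a - 1 by ring] at h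
  exact ⟨h.summable, h.tsum_eq⟩
end

section
/- The function φ(u) = (7/2)u^{3/2} − (7/2)u^{5/2} + u^{7/2} on (0,1) satisfies the ordinary differential equation u²(1−u)²φ''(u) + 2u(a − u + (1−a)u²)φ'(u) − a(3a−1)(1−u)²φ(u) = 0 with parameter a = 3/2, together with the boundary conditions φ(u) → 0 as u → 0+ and φ(u) → 1 as u → 1−. (This is the case b = 7/4, κ = 4/3.) -/
/-!
Writing `s = √u`, the function is the polynomial `φ = (7/2) s³ − (7/2) s⁵ + s⁷`, and its first two
derivatives are Laurent polynomials in `s`. Substituting them into the equation with `a = 3/2`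
leaves a rational identity in `s`. Since every exponent is positive, `φ` is continuous on `[0, ∞)`,
so the boundary values are `φ 0 = 0` and `φ 1 = 1`.
-/

open Set Filter Real

noncomputable def phi (u : ℝ) : ℝ :=
  7/2 * u ^ ((3:ℝ)/2) - 7/2 * u ^ ((5:ℝ)/2) + u ^ ((7:ℝ)/2)

lemma sq_rpow_intCast_div_two {s : ℝ} (hs : 0 ≤ s) (n : ℤ) : (s ^ 2) ^ ((n:ℝ)/2) = s ^ n := by
  rw [← rpow_natCast, ← rpow_mul hs, ← rpow_intCast]
  ring_nf

lemma hasDerivAt_phi {u : ℝ} (hu : 0 < u) :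
    HasDerivAt phi (21/4 * u ^ ((1:ℝ)/2) - 35/4 * u ^ ((3:ℝ)/2) + 7/2 * u ^ ((5:ℝ)/2)) u := by
  have h (p : ℝ) := hasDerivAt_rpow_const (x := u) (p := p) (Or.inl hu.ne')
  refine (((h (3/2)).const_mul (7/2 : ℝ)).sub ((h (5/2)).const_mul (7/2 : ℝ))).add (h (7/2))
    |>.congr_deriv ?_
  norm_num
  ring

lemma deriv_phi_eventuallyEq {u : ℝ} (hu : 0 < u) :
    deriv phi =ᶠ[nhds u]
      fun v ↦ 21/4 * v ^ ((1:ℝ)/2) - 35/4 * v ^ ((3:ℝ)/2) + 7/2 * v ^ ((5:ℝ)/2) := by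
  filter_upwards [Ioi_mem_nhds hu] with v hv using (hasDerivAt_phi hv).deriv

lemma deriv_deriv_phi {u : ℝ} (hu : 0 < u) :
    deriv (deriv phi) u
      = 21/8 * u ^ (-(1:ℝ)/2) - 105/8 * u ^ ((1:ℝ)/2) + 35/4 * u ^ ((3:ℝ)/2) := by
  rw [(deriv_phi_eventuallyEq hu).deriv_eq]
  have h (p : ℝ) := hasDerivAt_rpow_const (x := u) (p := p) (Or.inl hu.ne')
  refine (((h (1/2)).const_mul (21/4 : ℝ) |>.sub ((h (3/2)).const_mul (35/4 : ℝ))).add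
    ((h (5/2)).const_mul (7/2 : ℝ))).deriv.trans ?_
  norm_num
  ring

lemma phi_ode {u : ℝ} (hu : 0 < u) :
    u^2 * (1-u)^2 * deriv (deriv phi) u
      + 2*u*(3/2 - u + (1-3/2)*u^2) * deriv phi u
      - 3/2*(3*(3/2)-1)*(1-u)^2 * phi u = 0 := by
  rw [deriv_deriv_phi hu, (hasDerivAt_phi hu).deriv, phi]
  obtain ⟨s, hs, rfl⟩ : ∃ s, 0 < s ∧ u = s ^ 2 := ⟨√u, sqrt_pos.2 hu, (sq_sqrt hu.le).symm⟩
  have k₁ := sq_rpow_intCast_div_two hs.le 1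
  have k₃ := sq_rpow_intCast_div_two hs.le 3
  have k₅ := sq_rpow_intCast_div_two hs.le 5
  have k₇ := sq_rpow_intCast_div_two hs.le 7
  have kinv := sq_rpow_intCast_div_two hs.le (-1)
  push_cast at k₁ k₃ k₅ k₇ kinv
  rw [k₁, k₃, k₅, k₇, kinv]
  field_simp
  ring

lemma continuous_phi : Continuous phi := by
  unfold phi
  fun_prop (disch := norm_num)

/-- `φ(u) = (7/2)u^{3/2} − (7/2)u^{5/2} + u^{7/2}` satisfies
`u²(1−u)²φ'' + 2u(a − u + (1−a)u²)φ' − a(3a−1)(1−u)²φ = 0` on `(0,1)` with `a = 3/2`,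
and `φ(u) → 0` as `u → 0+`, `φ(u) → 1` as `u → 1−`. -/
theorem statement9 (a : ℝ) (ha : a = 3/2) (φ : ℝ → ℝ)
    (hφ : ∀ u : ℝ, φ u = (7/2) * u ^ ((3:ℝ)/2) - (7/2) * u ^ ((5:ℝ)/2) + u ^ ((7:ℝ)/2)) :
    (∀ u ∈ Set.Ioo (0:ℝ) 1,
      u^2 * (1-u)^2 * deriv (deriv φ) u
        + 2*u*(a - u + (1-a)*u^2) * deriv φ u
        - a*(3*a-1)*(1-u)^2 * φ u = 0) ∧
    Tendsto φ (nhdsWithin 0 (Set.Ioi 0)) (nhds 0) ∧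
    Tendsto φ (nhdsWithin 1 (Set.Iio 1)) (nhds 1) := by
  obtain rfl : φ = phi := funext hφ
  subst ha
  have phi_zero : phi 0 = 0 := by norm_num [phi]
  have phi_one : phi 1 = 1 := by norm_num [phi]
  refine ⟨fun u hu ↦ phi_ode hu.1, ?_, ?_⟩
  · simpa [phi_zero] using (continuous_phi.tendsto 0).mono_left nhdsWithin_le_nhds
  · simpa [phi_one] using (continuous_phi.tendsto 1).mono_left nhdsWithin_le_nhds
end

section
/- Let a, b ∈ ℝ, T > 0, and let U : [0,T] → ℝ be continuous. Suppose G, H : [0,T] → ℝ are differentiable with G'(t) = a/(G(t) − U(t)) and H'(t) = a/(H(t) − U(t)) for all t, and U(t) < G(t) < H(t) for all t ∈ [0,T]. Suppose P, Q : [0,T] → ℝ are differentiable with P(0) = Q(0) = 1, P'(t) = −aP(t)/(G(t) − U(t))² and Q'(t) = −aQ(t)/(H(t) − U(t))². Then P(t) > 0 and Q(t) > 0 for all t, and for every t ∈ [0,T], (P(t)Q(t))^b / (H(t) − G(t))^{2b} = (H(0) − G(0))^{−2b} · exp{ −ab ∫₀ᵗ (1/(G(s) − U(s)) − 1/(H(s)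 − U(s)))² ds }. -/
/-!
`P` and `Q` solve scalar linear equations `y' = c y` with `c` continuous on `[0, T]`, so they are
exponentials of integrals and hence positive. Since `(H - G)' = -a (H - G) / ((G - U) (H - U))`,
the quotient `W = P Q / (H - G)²` solves `W' = -a (1/(G - U) - 1/(H - U))² W` as well, and the
identity is the `b`-th power of the resulting exponential formula for `W`.
-/

open Set intervalIntegral

section LinearODE

variable {E : Type*} [NormedAddCommGroup E] [NormedSpace ℝ E] {a b : ℝ}

theorem hasDerivWithinAt_integral_Icc [CompleteSpace E] {c : ℝ → E}
    (hc : ContinuousOn c (Icc a b)) {t : ℝ} (ht : t ∈ Icc a b) :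
    HasDerivWithinAt (fun u => ∫ s in a..u, c s) (c t) (Icc a b) t := by
  have : Fact (t ∈ Icc a b) := ⟨ht⟩
  refine integral_hasDerivWithinAt_right ?_
    (hc.stronglyMeasurableAtFilter_nhdsWithin measurableSet_Icc t) (hc t ht)
  exact (hc.mono (Icc_subset_Icc_right ht.2)).intervalIntegrable_of_Icc ht.1

theorem eq_left_of_hasDerivWithinAt_Icc_zero {f : ℝ → E}
    (hf : ∀ t ∈ Icc a b, HasDerivWithinAt f 0 (Icc a b) t) : ∀ t ∈ Icc a b, f t = f a :=
  constant_of_has_deriv_right_zero (fun t ht => (hf t ht).continuousWithinAt)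
    fun t ht => (hf t (Ico_subset_Icc_self ht)).mono_of_mem_nhdsWithin (Icc_mem_nhdsGE_of_mem ht)

theorem eq_mul_exp_integral_of_hasDerivWithinAt {c y : ℝ → ℝ} (hc : ContinuousOn c (Icc a b))
    (hy : ∀ t ∈ Icc a b, HasDerivWithinAt y (c t * y t) (Icc a b) t) :
    ∀ t ∈ Icc a b, y t = y a * Real.exp (∫ s in a..t, c s) := by
  have hconst : ∀ t ∈ Icc a b, y t * Real.exp (-∫ s in a..t, c s) = y a := by
    simpa using eq_left_of_hasDerivWithinAt_Icc_zero fun t ht =>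
      ((hy t ht).mul (hasDerivWithinAt_integral_Icc hc ht).neg.exp).congr_deriv (by ring)
  intro t ht
  rw [← hconst t ht, mul_assoc, ← Real.exp_add, neg_add_cancel, Real.exp_zero, mul_one]

end LinearODE

theorem hasDerivWithinAt_mul_div_sub_sq {G H P Q : ℝ → ℝ} {s : Set ℝ} {a u t : ℝ}
    (hG : HasDerivWithinAt G (a / (G t - u)) s t) (hH : HasDerivWithinAt H (a / (H t - u)) s t)
    (hP : HasDerivWithinAt P (-(a * P t) / (G t - u) ^ 2) s t)
    (hQ : HasDerivWithinAt Q (-(a * Q t) / (H t - u) ^ 2) s t)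
    (hGu : G t - u ≠ 0) (hHu : H t - u ≠ 0) (hGH : H t - G t ≠ 0) :
    HasDerivWithinAt (fun x => P x * Q x / (H x - G x) ^ 2)
      (-a * (1 / (G t - u) - 1 / (H t - u)) ^ 2 * (P t * Q t / (H t - G t) ^ 2)) s t := by
  refine ((hP.mul hQ).div ((hH.sub hG).pow 2) (pow_ne_zero 2 hGH)).congr_deriv ?_
  simp only [Pi.mul_apply, Pi.sub_apply, Pi.pow_apply]
  field_simp
  ring

theorem rpow_div_rpow_two_mul {x y : ℝ} (hx : 0 ≤ x) (hy : 0 ≤ y) (b : ℝ) :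
    x ^ b / y ^ (2 * b) = (x / y ^ 2) ^ b := by
  rw [Real.div_rpow hx (sq_nonneg y), Real.rpow_mul hy, Real.rpow_two]

theorem statement10_general (a b T : ℝ)
    (U G H P Q : ℝ → ℝ)
    (hU : ContinuousOn U (Set.Icc 0 T))
    (hG : ∀ t ∈ Set.Icc (0:ℝ) T,
      HasDerivWithinAt G (a / (G t - U t)) (Set.Icc 0 T) t)
    (hH : ∀ t ∈ Set.Icc (0:ℝ) T,
      HasDerivWithinAt H (a / (H t - U t)) (Set.Icc 0 T) t)
    (hUG : ∀ t ∈ Set.Icc (0:ℝ) T, U t < G t)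
    (hGH : ∀ t ∈ Set.Icc (0:ℝ) T, G t < H t)
    (hP0 : P 0 = 1) (hQ0 : Q 0 = 1)
    (hP : ∀ t ∈ Set.Icc (0:ℝ) T,
      HasDerivWithinAt P (-(a * P t) / (G t - U t)^2) (Set.Icc 0 T) t)
    (hQ : ∀ t ∈ Set.Icc (0:ℝ) T,
      HasDerivWithinAt Q (-(a * Q t) / (H t - U t)^2) (Set.Icc 0 T) t) :
    (∀ t ∈ Set.Icc (0:ℝ) T, 0 < P t ∧ 0 < Q t) ∧
    (∀ t ∈ Set.Icc (0:ℝ) T,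
      (P t * Q t) ^ b / (H t - G t) ^ (2*b)
        = (H 0 - G 0) ^ (-(2*b)) *
          Real.exp (-(a*b) *
            ∫ s in (0:ℝ)..t, (1/(G s - U s) - 1/(H s - U s))^2)) := by
  have hg : ∀ t ∈ Icc 0 T, G t - U t ≠ 0 := fun t ht => (sub_pos.2 (hUG t ht)).ne'
  have hh : ∀ t ∈ Icc 0 T, H t - U t ≠ 0 := fun t ht =>
    (sub_pos.2 ((hUG t ht).trans (hGH t ht))).ne'
  have hGc : ContinuousOn G (Icc 0 T) := fun t ht => (hG t ht).continuousWithinAt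
  have hHc : ContinuousOn H (Icc 0 T) := fun t ht => (hH t ht).continuousWithinAt
  have hPexp := eq_mul_exp_integral_of_hasDerivWithinAt (c := fun s => -a / (G s - U s) ^ 2)
    (continuousOn_const.div (by fun_prop) fun t ht => pow_ne_zero 2 (hg t ht))
    fun t ht => (hP t ht).congr_deriv (by ring)
  have hQexp := eq_mul_exp_integral_of_hasDerivWithinAt (c := fun s => -a / (H s - U s) ^ 2)
    (continuousOn_const.div (by fun_prop) fun t ht => pow_ne_zero 2 (hh t ht))
    fun t ht => (hQ t ht).congr_deriv (by ring)
  have hPQ : ∀ t ∈ Icc 0 T, 0 < P t ∧ 0 < Q t := fun t ht => by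
    rw [hPexp t ht, hQexp t ht, hP0, hQ0, one_mul, one_mul]
    exact ⟨Real.exp_pos _, Real.exp_pos _⟩
  have hW := eq_mul_exp_integral_of_hasDerivWithinAt
    (c := fun s => -a * (1 / (G s - U s) - 1 / (H s - U s)) ^ 2) (by fun_prop (disch := assumption))
    fun t ht => hasDerivWithinAt_mul_div_sub_sq (hG t ht) (hH t ht) (hP t ht) (hQ t ht) (hg t ht)
      (hh t ht) (sub_pos.2 (hGH t ht)).ne'
  refine ⟨hPQ, fun t ht => ?_⟩
  have h0 : (0 : ℝ) ∈ Icc 0 T := left_mem_Icc.2 (ht.1.trans ht.2)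
  have hD0 : 0 ≤ H 0 - G 0 := (sub_pos.2 (hGH 0 h0)).le
  rw [rpow_div_rpow_two_mul (mul_pos (hPQ t ht).1 (hPQ t ht).2).le (sub_pos.2 (hGH t ht)).le,
    hW t ht, hP0, hQ0, mul_one, intervalIntegral.integral_const_mul, Real.mul_rpow (by positivity)
    (Real.exp_pos _).le, ← rpow_div_rpow_two_mul zero_le_one hD0, Real.one_rpow, one_div,
    ← Real.rpow_neg hD0, ← Real.exp_mul]
  ring_nf

/-- pathwise identity for the chordal Loewner equation. If
`G' = a/(G − U)`, `H' = a/(H − U)` with `U < G < H` on `[0,T]`, and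
`P' = −aP/(G − U)²`, `Q' = −aQ/(H − U)²` with `P(0) = Q(0) = 1`, then `P, Q > 0` and
`(PQ)^b/(H − G)^{2b} = (H(0) − G(0))^{−2b} exp{−ab ∫₀ᵗ (1/(G−U) − 1/(H−U))² ds}`. -/
theorem statement10 (a b T : ℝ) (hT : 0 < T)
    (U G H P Q : ℝ → ℝ)
    (hU : ContinuousOn U (Set.Icc 0 T))
    (hG : ∀ t ∈ Set.Icc (0:ℝ) T,
      HasDerivWithinAt G (a / (G t - U t)) (Set.Icc 0 T) t)
    (hH : ∀ t ∈ Set.Icc (0:ℝ) T,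
      HasDerivWithinAt H (a / (H t - U t)) (Set.Icc 0 T) t)
    (hUG : ∀ t ∈ Set.Icc (0:ℝ) T, U t < G t)
    (hGH : ∀ t ∈ Set.Icc (0:ℝ) T, G t < H t)
    (hP0 : P 0 = 1) (hQ0 : Q 0 = 1)
    (hP : ∀ t ∈ Set.Icc (0:ℝ) T,
      HasDerivWithinAt P (-(a * P t) / (G t - U t)^2) (Set.Icc 0 T) t)
    (hQ : ∀ t ∈ Set.Icc (0:ℝ) T,
      HasDerivWithinAt Q (-(a * Q t) / (H t - U t)^2) (Set.Icc 0 T) t) :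
    (∀ t ∈ Set.Icc (0:ℝ) T, 0 < P t ∧ 0 < Q t) ∧
    (∀ t ∈ Set.Icc (0:ℝ) T,
      (P t * Q t) ^ b / (H t - G t) ^ (2*b)
        = (H 0 - G 0) ^ (-(2*b)) *
          Real.exp (-(a*b) *
            ∫ s in (0:ℝ)..t, (1/(G s - U s) - 1/(H s - U s))^2)) :=
  statement10_general a b T U G H P Q hU hG hH hUG hGH hP0 hQ0 hP hQ
end

section
/- Let A be a nonempty finite subset of ℤ², let z, w ∈ ∂A be distinct, and let η = [η_0, η_1, …, η_k] be a self-avoiding excursion in A from z to w (so η_0 = z, η_k = w, the points η_0,…,η_k are distinct, and η_1,…,η_{k−1} ∈ A). Then the sum of 4^{−|ω|} over all excursions ω in A from z to w whose chronological loop erasure equals η is 4^{−k} · Π_{j=1}^{k−1} q_{A_j}(η_j)^{−1}, where A_j = A ∖ {η_1,…,η_{j−1}} and q_B(x) is the probability that simple random walk started at x leaves B before returning to x, i.e., q_B(x) = 1 − Σ 4^{−|ω|}, the sum over loops in B rooted at x with θ(ω) = 1. -/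
open scoped ENNReal

/-- Nearest-neighbor adjacency on `ℤ²`. -/
def Adj (p q : ℤ × ℤ) : Prop := (p.1 - q.1).natAbs + (p.2 - q.2).natAbs = 1

/-- The outer boundary `∂A = {v ∉ A : dist(v,A) = 1}`. -/
def bdry (A : Set (ℤ × ℤ)) : Set (ℤ × ℤ) := {v | v ∉ A ∧ ∃ u ∈ A, Adj v u}

/-- `ω = [ω_0, …, ω_n]` is an excursion in `A` from `z` to `w`:
nearest-neighbor steps, `ω_0 = z`, `ω_n = w`, and `ω_1, …, ω_{n−1} ∈ A`. -/
def IsExcursion (A : Set (ℤ × ℤ)) (z w : ℤ × ℤ) (ω : List (ℤ × ℤ)) : Prop :=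
  2 ≤ ω.length ∧ ω.head? = some z ∧ ω.getLast? = some w ∧
    (∀ p ∈ ω.tail.dropLast, p ∈ A) ∧ List.Chain' Adj ω

/-- Loop in `B` rooted at `x`: `ω_0 = ω_n = x`, `n ≥ 2`, `ω_1,…,ω_n ∈ B`. -/
def IsLoopAt (B : Set (ℤ × ℤ)) (x : ℤ × ℤ) (ω : List (ℤ × ℤ)) : Prop :=
  3 ≤ ω.length ∧ ω.head? = some x ∧ ω.getLast? = some x ∧
    (∀ p ∈ ω.tail, p ∈ B) ∧ List.Chain' Adj ω

/-- The weight `4^{−|ω|}` of a path, where `|ω|` is the number of steps. -/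
noncomputable def pathWeight (ω : List (ℤ × ℤ)) : ℝ≥0∞ := (4 : ℝ≥0∞)⁻¹ ^ (ω.length - 1)

/-- `q_B(x)`: the probability that simple random walk from `x` leaves `B` before
returning to `x`, i.e. `1` minus the total weight of loops in `B` rooted at `x`
that return to `x` exactly once. -/
noncomputable def escProb (B : Set (ℤ × ℤ)) (x : ℤ × ℤ) : ℝ≥0∞ :=
  1 - ∑' ω : {ω : List (ℤ × ℤ) // IsLoopAt B x ω ∧ ω.tail.count x = 1}, pathWeight ω.val

/-- Chronological loop erasure, as a relation: `IsLE ω η` holds iff the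
loop erasure of `ω` is `η`. At each stage the path is split as `pre ++ ys`,
where `pre` runs from the current point `x` through its *last* occurrence
(`x ∉ ys`), and `x` is recorded. -/
inductive IsLE : List (ℤ × ℤ) → List (ℤ × ℤ) → Prop
  | nil : IsLE [] []
  | cons (x : ℤ × ℤ) (pre ys η : List (ℤ × ℤ)) :
      pre.head? = some x → pre.getLast? = some x → x ∉ ys → IsLE ys η →
      IsLE (pre ++ ys) (x :: η)

/-!
Cut a path `ω` to `w` whose loop erasure is `x :: η` at its last visit to `x`: `ω = pre ++ ys`,
where `pre` is a closed path at `x` in `B` and `ys` is a path in `B \ {x}` whose loop erasure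
is `η`. This is a bijection under which weights multiply, up to the one step `4⁻¹` between them.
Cutting a closed path at each return to `x` shows that those with `m` returns weigh
`(1 - q_B(x))^m` in total, so all closed paths together weigh `∑ₘ (1 - q_B(x))^m = q_B(x)⁻¹`.
Induction along `η` gives the product; an excursion from `z ∉ A` is `z` followed by such a path.
-/

namespace List

variable {α : Type*}

theorem append_cons_inj_of_notMem_left {x : α} {u u' r r' : List α}
    (h : u ++ x :: r = u' ++ x :: r') (hu : x ∉ u) (hu' : x ∉ u') : u = u' ∧ r = r' := by
  induction u generalizing u' with
  | nil =>
    cases u' with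
    | nil => simpa using h
    | cons a' u' =>
      simp only [nil_append, cons_append, cons.injEq, mem_cons, not_or] at h hu'
      exact absurd h.1 hu'.1
  | cons a u ih =>
    cases u' with
    | nil =>
      simp only [nil_append, cons_append, cons.injEq, mem_cons, not_or] at h hu
      exact absurd h.1.symm hu.1
    | cons a' u' =>
      simp only [cons_append, cons.injEq, mem_cons, not_or] at h hu hu' ⊢
      exact ⟨⟨h.1, (ih h.2 hu.2 hu'.2).1⟩, (ih h.2 hu.2 hu'.2).2⟩

theorem append_inj_of_getLast?_eq {x : α} {p₁ p₂ y₁ y₂ : List α} (h : p₁ ++ y₁ = p₂ ++ y₂)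
    (hp₁ : p₁.getLast? = some x) (hp₂ : p₂.getLast? = some x) (hy₁ : x ∉ y₁) (hy₂ : x ∉ y₂) :
    p₁ = p₂ ∧ y₁ = y₂ := by
  obtain ⟨t₁, rfl⟩ := getLast?_eq_some_iff.1 hp₁
  obtain ⟨t₂, rfl⟩ := getLast?_eq_some_iff.1 hp₂
  have := append_cons_inj_of_notMem_left (x := x) (r := t₁.reverse) (r' := t₂.reverse)
    (by simpa using congrArg reverse h) (by simpa using hy₁) (by simpa using hy₂)
  simp_all

end List

open List

theorem adj_irrefl (x : ℤ × ℤ) : ¬ Adj x x := by simp [Adj]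

section Weights

variable {a b : List (ℤ × ℤ)}

theorem pathWeight_append (ha : a ≠ []) (hb : b ≠ []) :
    pathWeight (a ++ b) = pathWeight a * 4⁻¹ * pathWeight b := by
  have := length_pos_iff.2 ha
  have := length_pos_iff.2 hb
  rw [pathWeight, pathWeight, pathWeight, length_append, ← pow_succ, ← pow_add]
  congr 1
  omega

theorem pathWeight_append_tail (ha : a ≠ []) :
    pathWeight (a ++ b.tail) = pathWeight a * pathWeight b := by
  have := length_pos_iff.2 ha
  rw [pathWeight, pathWeight, pathWeight, length_append, length_tail, ← pow_add]
  congr 1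
  omega

theorem pathWeight_cons (x : ℤ × ℤ) (hb : b ≠ []) :
    pathWeight (x :: b) = 4⁻¹ * pathWeight b := by
  simpa [pathWeight] using pathWeight_append (a := [x]) (cons_ne_nil x []) hb

end Weights

theorem ENNReal.tsum_eq_mul_of_bijective {β γ δ : Type*} {f : β → ℝ≥0∞} {g : γ → ℝ≥0∞}
    {h : δ → ℝ≥0∞} (e : β × γ → δ) (he : e.Bijective) (hw : ∀ b c, h (e (b, c)) = f b * g c) :
    ∑' d, h d = (∑' b, f b) * ∑' c, g c := by
  rw [← (Equiv.ofBijective e he).tsum_eq, ENNReal.tsum_prod', ← ENNReal.tsum_mul_right]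
  refine tsum_congr fun b => ?_
  rw [← ENNReal.tsum_mul_left]
  exact tsum_congr fun c => hw b c

section ClosedPaths

def IsClosedPath (B : Set (ℤ × ℤ)) (x : ℤ × ℤ) (l : List (ℤ × ℤ)) : Prop :=
  l.head? = some x ∧ l.getLast? = some x ∧ (∀ p ∈ l.tail, p ∈ B) ∧ l.IsChain Adj

variable {B : Set (ℤ × ℤ)} {x : ℤ × ℤ} {l : List (ℤ × ℤ)}

theorem isClosedPath_singleton : IsClosedPath B x [x] :=
  ⟨rfl, rfl, by simp, isChain_singleton x⟩

theorem IsClosedPath.ne_nil (h : IsClosedPath B x l) : l ≠ [] := by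
  rintro rfl
  simp [IsClosedPath] at h

theorem isLoopAt_iff_isClosedPath (hx : x ∈ l.tail) : IsLoopAt B x l ↔ IsClosedPath B x l := by
  refine ⟨fun ⟨_, h⟩ => h, fun h => ⟨?_, h⟩⟩
  obtain ⟨t, rfl⟩ := head?_eq_some_iff.1 h.1
  rcases t with _ | ⟨b, _ | ⟨c, t⟩⟩
  · simp at hx
  · obtain rfl : x = b := by simpa using hx
    exact absurd (isChain_pair.1 h.2.2.2) (adj_irrefl x)
  · simp

theorem isClosedPath_cons_append_cons_iff {u r : List (ℤ × ℤ)} :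
    IsClosedPath B x (x :: (u ++ x :: r)) ↔
      IsClosedPath B x (x :: (u ++ [x])) ∧ IsClosedPath B x (x :: r) := by
  have hlast : (x :: (u ++ x :: r)).getLast? = (x :: r).getLast? := by
    rw [getLast?_cons_of_ne_nil (by simp), getLast?_append_of_ne_nil _ (cons_ne_nil _ _)]
  simp only [IsClosedPath, head?_cons, hlast, tail_cons, isChain_cons_split (l₂ := r), true_and]
  constructor
  · rintro ⟨hl, hB, hu, hr⟩
    exact ⟨⟨by rw [← cons_append, getLast?_concat], fun p hp => hB p (by simp at hp ⊢; tauto), hu⟩,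
      ⟨hl, fun p hp => hB p (by simp [hp]), hr⟩⟩
  · rintro ⟨⟨-, hBu, hu⟩, ⟨hl, hBr, hr⟩⟩
    refine ⟨hl, fun p hp => ?_, hu, hr⟩
    simp only [mem_append, mem_cons] at hp
    rcases hp with hp | rfl | hp
    · exact hBu p (by simp [hp])
    · exact hBu p (by simp)
    · exact hBr p hp

theorem IsClosedPath.exists_eq_cons_append_cons (h : IsClosedPath B x l) (hx : x ∈ l.tail) :
    ∃ u r, x ∉ u ∧ l = x :: (u ++ x :: r) := by
  obtain ⟨t, rfl⟩ := head?_eq_some_iff.1 h.1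
  obtain ⟨u, r, hu, rfl, -⟩ := exists_erase_eq hx
  exact ⟨u, r, hu, rfl⟩

theorem IsClosedPath.eq_singleton (h : IsClosedPath B x l) (hc : l.tail.count x = 0) :
    l = [x] := by
  obtain ⟨t, rfl⟩ := head?_eq_some_iff.1 h.1
  rcases eq_or_ne t [] with rfl | ht
  · rfl
  · have := h.2.1
    rw [getLast?_cons_of_ne_nil ht] at this
    exact absurd (mem_of_getLast? this) (count_eq_zero.1 hc)

theorem IsClosedPath.eq_cons_append_singleton (h : IsClosedPath B x l)
    (hc : l.tail.count x = 1) : ∃ u, x ∉ u ∧ l = x :: (u ++ [x]) := by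
  obtain ⟨u, r, hu, rfl⟩ := h.exists_eq_cons_append_cons (count_pos_iff.1 (by omega))
  have hr : x ∉ r := by simpa [count_eq_zero, count_append, count_eq_zero_of_not_mem hu] using hc
  rcases eq_or_ne r [] with rfl | hr'
  · exact ⟨u, hu, rfl⟩
  · have := h.2.1
    rw [getLast?_cons_of_ne_nil (by simp), getLast?_append_of_ne_nil _ (cons_ne_nil _ _),
      getLast?_cons_of_ne_nil hr'] at this
    exact absurd (mem_of_getLast? this) hr

theorem IsClosedPath.append_tail {l' : List (ℤ × ℤ)} (h : IsClosedPath B x l)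
    (h' : IsClosedPath B x l') : IsClosedPath B x (l ++ l'.tail) := by
  obtain ⟨r, rfl⟩ := head?_eq_some_iff.1 h'.1
  obtain ⟨t, rfl⟩ := head?_eq_some_iff.1 h.1
  rcases eq_or_ne t [] with rfl | ht
  · exact h'
  · have hlast := h.2.1
    rw [getLast?_cons_of_ne_nil ht] at hlast
    obtain ⟨u, rfl⟩ := getLast?_eq_some_iff.1 hlast
    simpa using isClosedPath_cons_append_cons_iff.2 ⟨h, h'⟩

end ClosedPaths

section ClosedPathWeight

variable {B : Set (ℤ × ℤ)} {x : ℤ × ℤ}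

noncomputable def closedPathWeight (B : Set (ℤ × ℤ)) (x : ℤ × ℤ) (m : ℕ) : ℝ≥0∞ :=
  ∑' l : {l : List (ℤ × ℤ) // IsClosedPath B x l ∧ l.tail.count x = m}, pathWeight l.val

theorem escProb_eq_one_sub_closedPathWeight : escProb B x = 1 - closedPathWeight B x 1 :=
  congrArg (1 - ·) <| (Equiv.subtypeEquivRight fun _ => and_congr_left fun hc =>
    isLoopAt_iff_isClosedPath (count_pos_iff.1 (by omega))).tsum_eq (pathWeight ·.val)

theorem closedPathWeight_zero : closedPathWeight B x 0 = 1 := by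
  rw [closedPathWeight, tsum_eq_single ⟨[x], isClosedPath_singleton, count_nil⟩
    fun l hl => absurd (Subtype.ext (l.2.1.eq_singleton l.2.2)) hl]
  simp [pathWeight]

theorem closedPathWeight_succ (m : ℕ) :
    closedPathWeight B x (m + 1) = closedPathWeight B x 1 * closedPathWeight B x m := by
  have hglue : ∀ {l₁ l₂}, IsClosedPath B x l₁ ∧ l₁.tail.count x = 1 →
      IsClosedPath B x l₂ ∧ l₂.tail.count x = m →
      IsClosedPath B x (l₁ ++ l₂.tail) ∧ (l₁ ++ l₂.tail).tail.count x = m + 1 := fun h₁ h₂ =>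
    ⟨h₁.1.append_tail h₂.1,
      by rw [tail_append_of_ne_nil h₁.1.ne_nil, count_append, h₁.2, h₂.2, add_comm]⟩
  refine ENNReal.tsum_eq_mul_of_bijective (fun p => ⟨p.1.1 ++ p.2.1.tail, hglue p.1.2 p.2.2⟩)
    ⟨?_, ?_⟩ fun p _ => pathWeight_append_tail p.2.1.ne_nil
  · rintro ⟨⟨l₁, h₁⟩, ⟨l₂, h₂⟩⟩ ⟨⟨l₁', h₁'⟩, ⟨l₂', h₂'⟩⟩ he
    obtain ⟨u, hu, rfl⟩ := h₁.1.eq_cons_append_singleton h₁.2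
    obtain ⟨u', hu', rfl⟩ := h₁'.1.eq_cons_append_singleton h₁'.2
    obtain ⟨r, rfl⟩ := head?_eq_some_iff.1 h₂.1.1
    obtain ⟨r', rfl⟩ := head?_eq_some_iff.1 h₂'.1.1
    simp only [Subtype.mk.injEq, cons_append, append_assoc, tail_cons,
      cons.injEq, true_and] at he
    obtain ⟨rfl, rfl⟩ := append_cons_inj_of_notMem_left he hu hu'
    rfl
  · rintro ⟨l, hl, hc⟩
    obtain ⟨u, r, hu, rfl⟩ := hl.exists_eq_cons_append_cons (count_pos_iff.1 (by omega))
    obtain ⟨h₁, h₂⟩ := isClosedPath_cons_append_cons_iff.1 hl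
    refine ⟨⟨⟨_, h₁, by simp [count_eq_zero_of_not_mem hu]⟩,
      ⟨_, h₂, by simpa [count_append, count_eq_zero_of_not_mem hu] using hc⟩⟩, by simp⟩

theorem closedPathWeight_eq_pow (m : ℕ) :
    closedPathWeight B x m = closedPathWeight B x 1 ^ m := by
  induction m with
  | zero => rw [closedPathWeight_zero, pow_zero]
  | succ m ih => rw [closedPathWeight_succ, ih, pow_succ']

/-- Splitting closed paths by their number of returns gives a geometric series, whose sum
`(1 - r)⁻¹` is valid in `ℝ≥0∞` for every ratio `r`. -/
theorem tsum_closedPath_eq_inv_escProb :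
    ∑' l : {l : List (ℤ × ℤ) // IsClosedPath B x l}, pathWeight l.val = (escProb B x)⁻¹ := by
  rw [← ENNReal.tsum_fiberwise _ fun l : {l // IsClosedPath B x l} => l.val.tail.count x,
    escProb_eq_one_sub_closedPathWeight, ← ENNReal.tsum_geometric]
  refine tsum_congr fun m => ?_
  rw [← closedPathWeight_eq_pow]
  exact (Equiv.subtypeSubtypeEquivSubtypeInter _ (fun l => l.tail.count x = m)).tsum_eq
    (pathWeight ·.val)

end ClosedPathWeight

section PathsTo

def IsPathTo (B : Set (ℤ × ℤ)) (w : ℤ × ℤ) (l : List (ℤ × ℤ)) : Prop :=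
  l.getLast? = some w ∧ (∀ p ∈ l.dropLast, p ∈ B) ∧ l.IsChain Adj

variable {B : Set (ℤ × ℤ)} {x w : ℤ × ℤ} {l pre ys : List (ℤ × ℤ)}

theorem IsPathTo.ne_nil (h : IsPathTo B w l) : l ≠ [] := by
  rintro rfl
  simp [IsPathTo] at h

theorem IsPathTo.notMem (h : IsPathTo B w l) (hxB : x ∉ B) (hxw : x ≠ w) : x ∉ l := by
  obtain ⟨t, rfl⟩ := getLast?_eq_some_iff.1 h.1
  intro hx
  rcases mem_append.1 hx with hx | hx
  · exact hxB (h.2.1 x (by simpa using hx))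
  · exact hxw (mem_singleton.1 hx)

theorem isPathTo_diff_singleton_iff (hx : x ∉ l) : IsPathTo (B \ {x}) w l ↔ IsPathTo B w l := by
  refine and_congr_right fun _ => and_congr_left fun _ => forall₂_congr fun p hp => ?_
  have : p ≠ x := fun h => hx (h ▸ dropLast_subset l hp)
  simp [this]

theorem IsPathTo.eq_singleton (h : IsPathTo B w l) (hw : w ∉ B) (hl : l.head? = some w) :
    l = [w] := by
  obtain ⟨t, rfl⟩ := head?_eq_some_iff.1 hl
  rcases eq_or_ne t [] with rfl | ht
  · rfl
  · exact absurd (h.2.1 w (by simp [dropLast_cons_of_ne_nil ht])) hw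

theorem isPathTo_append_iff (hh : pre.head? = some x) (hl : pre.getLast? = some x)
    (hys : ys ≠ []) : IsPathTo B w (pre ++ ys) ↔
      IsClosedPath B x pre ∧ x ∈ B ∧ IsPathTo B w ys ∧ ∀ y ∈ ys.head?, Adj x y := by
  obtain ⟨t, rfl⟩ := head?_eq_some_iff.1 hh
  rw [IsPathTo, IsPathTo, IsClosedPath, getLast?_append_of_ne_nil _ hys,
    dropLast_append_of_ne_nil hys, isChain_append, hl]
  simp only [Option.mem_def, Option.some.injEq, forall_eq', mem_append, mem_cons, tail_cons,
    head?_cons, true_and]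
  constructor
  · rintro ⟨hw, hB, hc, hcys, hadj⟩
    exact ⟨⟨fun p hp => hB p (by tauto), hc⟩, hB x (by tauto),
      ⟨hw, fun p hp => hB p (by tauto), hcys⟩, hadj⟩
  · rintro ⟨⟨hBt, hc⟩, hx, ⟨hw, hBys, hcys⟩, hadj⟩
    refine ⟨hw, fun p hp => ?_, hc, hcys, hadj⟩
    rcases hp with (rfl | hp) | hp
    exacts [hx, hBt p hp, hBys p hp]

end PathsTo

section Erasure

variable {B : Set (ℤ × ℤ)} {x w : ℤ × ℤ} {l η : List (ℤ × ℤ)}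

theorem IsLE.head?_eq (h : IsLE l η) : l.head? = η.head? := by
  cases h with
  | nil => rfl
  | cons x pre ys η h₁ => rw [head?_append, h₁]; rfl

theorem IsLE.ne_nil (h : IsLE l η) (hη : η ≠ []) : l ≠ [] := by
  cases h with
  | nil => exact hη
  | cons x pre ys η h₁ =>
    intro he
    simp [append_eq_nil_iff.1 he] at h₁

theorem isLE_cons_cons_iff (hx : x ∉ l) : IsLE (x :: l) (x :: η) ↔ IsLE l η := by
  refine ⟨fun h => ?_, IsLE.cons x [x] l η rfl rfl hx⟩
  generalize hω : x :: l = ω at h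
  cases h with
  | cons _ pre ys _ h₁ h₂ _ hle =>
    obtain ⟨t, rfl⟩ := head?_eq_some_iff.1 h₁
    simp only [cons_append, cons.injEq, true_and] at hω
    rcases eq_or_ne t [] with rfl | ht
    · rwa [hω]
    · rw [getLast?_cons_of_ne_nil ht] at h₂
      exact absurd (hω ▸ mem_append_left ys (mem_of_getLast? h₂)) hx

theorem tsum_isPathTo_isLE_singleton (hw : w ∉ B) :
    ∑' l : {l // IsPathTo B w l ∧ IsLE l [w]}, pathWeight l.val = 1 := by
  have hw' : IsPathTo B w [w] ∧ IsLE [w] [w] :=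
    ⟨⟨rfl, by simp, isChain_singleton w⟩, IsLE.cons w [w] [] [] rfl rfl not_mem_nil IsLE.nil⟩
  rw [tsum_eq_single ⟨[w], hw'⟩ fun l hl => absurd (Subtype.ext ?_) hl]
  · simp [pathWeight]
  · exact l.2.1.eq_singleton hw (by rw [l.2.2.head?_eq]; rfl)

/-- A path whose loop erasure starts at `x` splits uniquely at its last visit to `x`. -/
theorem tsum_isPathTo_isLE_cons (hx : x ∈ B) (hxw : x ≠ w) (hη : η ≠ [])
    (hadj : ∀ y ∈ η.head?, Adj x y) :
    ∑' l : {l // IsPathTo B w l ∧ IsLE l (x :: η)}, pathWeight l.val =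
      (escProb B x)⁻¹ *
        (4⁻¹ * ∑' l : {l // IsPathTo (B \ {x}) w l ∧ IsLE l η}, pathWeight l.val) := by
  have hxys : ∀ {ys}, IsPathTo (B \ {x}) w ys → x ∉ ys := fun h => h.notMem (·.2 rfl) hxw
  have hglue : ∀ {pre ys}, IsClosedPath B x pre → IsPathTo (B \ {x}) w ys ∧ IsLE ys η →
      IsPathTo B w (pre ++ ys) ∧ IsLE (pre ++ ys) (x :: η) := by
    rintro pre ys hpre ⟨hys, hle⟩
    refine ⟨(isPathTo_append_iff hpre.1 hpre.2.1 hys.ne_nil).2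
      ⟨hpre, hx, (isPathTo_diff_singleton_iff (hxys hys)).1 hys, by rwa [hle.head?_eq]⟩,
      hle.cons x pre ys η hpre.1 hpre.2.1 (hxys hys)⟩
  rw [← tsum_closedPath_eq_inv_escProb, ← ENNReal.tsum_mul_left]
  refine ENNReal.tsum_eq_mul_of_bijective (fun p => ⟨p.1.1 ++ p.2.1, hglue p.1.2 p.2.2⟩) ⟨?_, ?_⟩
    fun p q => by rw [pathWeight_append p.2.ne_nil q.2.1.ne_nil, mul_assoc]
  · rintro ⟨⟨pre, hpre⟩, ⟨ys, hys⟩⟩ ⟨⟨pre', hpre'⟩, ⟨ys', hys'⟩⟩ he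
    obtain ⟨rfl, rfl⟩ := append_inj_of_getLast?_eq (congrArg Subtype.val he) hpre.2.1
      hpre'.2.1 (hxys hys.1) (hxys hys'.1)
    rfl
  · rintro ⟨l, hl, hle⟩
    cases hle with
    | cons _ pre ys _ h₁ h₂ hx' hle =>
      obtain ⟨hpre, -, hys, -⟩ := (isPathTo_append_iff h₁ h₂ (hle.ne_nil hη)).1 hl
      exact ⟨⟨⟨pre, hpre⟩, ⟨ys, (isPathTo_diff_singleton_iff hx').2 hys, hle⟩⟩, rfl⟩

end Erasure

noncomputable def loopErasureWeight : Set (ℤ × ℤ) → List (ℤ × ℤ) → ℝ≥0∞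
  | _, [] => 1
  | _, [_] => 1
  | B, x :: y :: t => (escProb B x)⁻¹ * (4⁻¹ * loopErasureWeight (B \ {x}) (y :: t))

theorem tsum_isPathTo_isLE {B : Set (ℤ × ℤ)} {w : ℤ × ℤ} {η : List (ℤ × ℤ)}
    (hη : IsPathTo B w η) (hnd : η.Nodup) (hw : w ∉ B) :
    ∑' l : {l // IsPathTo B w l ∧ IsLE l η}, pathWeight l.val = loopErasureWeight B η := by
  induction η generalizing B with
  | nil => exact absurd rfl hη.ne_nil
  | cons x η ih =>
    rcases η with _ | ⟨y, t⟩
    · obtain rfl : x = w := by simpa using hη.1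
      exact tsum_isPathTo_isLE_singleton hw
    · obtain ⟨-, hx, hyt, hadj⟩ :=
        (isPathTo_append_iff (pre := [x]) rfl rfl (cons_ne_nil y t)).1 hη
      have hxyt : x ∉ y :: t := (nodup_cons.1 hnd).1
      rw [tsum_isPathTo_isLE_cons hx (by rintro rfl; exact hw hx) (cons_ne_nil y t) hadj,
        ih ((isPathTo_diff_singleton_iff hxyt).2 hyt) (nodup_cons.1 hnd).2 (fun h => hw h.1)]
      rfl

theorem loopErasureWeight_eq_prod (d : ℤ × ℤ) (B : Set (ℤ × ℤ)) (l : List (ℤ × ℤ)) :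
    loopErasureWeight B l = 4⁻¹ ^ (l.length - 1) *
      ∏ j ∈ Finset.range (l.length - 1), (escProb (B \ {p | p ∈ l.take j}) (l.getD j d))⁻¹ := by
  induction l generalizing B with
  | nil => simp [loopErasureWeight]
  | cons x l ih =>
    rcases l with _ | ⟨y, t⟩
    · simp [loopErasureWeight]
    · have hB (j : ℕ) : B \ {p | p ∈ (x :: y :: t).take (j + 1)} =
          (B \ {x}) \ {p | p ∈ (y :: t).take j} := by
        ext p
        simp [take_succ_cons, and_assoc]
      simp only [loopErasureWeight, ih, length_cons, add_tsub_cancel_right,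
        Finset.prod_range_succ', hB, getD_cons_succ, getD_cons_zero, take_zero, not_mem_nil,
        Set.ofPred_false, Set.sdiff_empty]
      ring

theorem isExcursion_cons_iff {A : Set (ℤ × ℤ)} {z w : ℤ × ℤ} {l : List (ℤ × ℤ)} :
    IsExcursion A z w (z :: l) ↔ IsPathTo A w l ∧ ∀ y ∈ l.head?, Adj z y := by
  rcases eq_or_ne l [] with rfl | hl
  · simp [IsExcursion, IsPathTo]
  · have hlen : 2 ≤ (z :: l).length := Nat.succ_le_succ (length_pos_iff.2 hl)
    constructor
    · rintro ⟨-, -, hw, hA, hc⟩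
      rw [getLast?_cons_of_ne_nil hl] at hw
      exact ⟨⟨hw, hA, IsChain.tail hc⟩, (isChain_cons.1 hc).1⟩
    · rintro ⟨⟨hw, hA, hc⟩, hadj⟩
      exact ⟨hlen, rfl, by rwa [getLast?_cons_of_ne_nil hl], hA, hc.cons hadj⟩

theorem tsum_isExcursion_isLE_cons {A : Set (ℤ × ℤ)} {z w : ℤ × ℤ} {η : List (ℤ × ℤ)}
    (hz : z ∉ A) (hzw : z ≠ w) (hadj : ∀ y ∈ η.head?, Adj z y) :
    ∑' ω : {ω // IsExcursion A z w ω ∧ IsLE ω (z :: η)}, pathWeight ω.val =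
      4⁻¹ * ∑' l : {l // IsPathTo A w l ∧ IsLE l η}, pathWeight l.val := by
  have hcons : ∀ {l}, IsPathTo A w l ∧ IsLE l η →
      IsExcursion A z w (z :: l) ∧ IsLE (z :: l) (z :: η) := fun ⟨hl, hle⟩ =>
    ⟨isExcursion_cons_iff.2 ⟨hl, by rwa [hle.head?_eq]⟩,
      (isLE_cons_cons_iff (hl.notMem hz hzw)).2 hle⟩
  have hbij : Function.Bijective fun l : {l // IsPathTo A w l ∧ IsLE l η} =>
      (⟨z :: l.1, hcons l.2⟩ : {ω // IsExcursion A z w ω ∧ IsLE ω (z :: η)}) := by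
    refine ⟨fun l l' he => Subtype.ext (by simpa using congrArg Subtype.val he), ?_⟩
    rintro ⟨ω, hω, hle⟩
    obtain ⟨l, rfl⟩ := head?_eq_some_iff.1 hω.2.1
    have hl := (isExcursion_cons_iff.1 hω).1
    exact ⟨⟨l, hl, (isLE_cons_cons_iff (hl.notMem hz hzw)).1 hle⟩, rfl⟩
  rw [← (Equiv.ofBijective _ hbij).tsum_eq, ← ENNReal.tsum_mul_left]
  exact tsum_congr fun l => pathWeight_cons z l.2.1.ne_nil

theorem statement14_general (A : Set (ℤ × ℤ))
    (z w : ℤ × ℤ) (hz : z ∈ bdry A) (hw : w ∈ bdry A) (hzw : z ≠ w)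
    (η : List (ℤ × ℤ)) (k : ℕ) (hk : η.length = k + 1)
    (hexc : IsExcursion A z w η) (hsa : η.Nodup) :
    (∑' ω : {ω : List (ℤ × ℤ) // IsExcursion A z w ω ∧ IsLE ω η}, pathWeight ω.val)
      = (4 : ℝ≥0∞)⁻¹ ^ k *
        ∏ j ∈ Finset.Ico 1 k,
          (escProb (A \ {p | p ∈ η.tail.take (j - 1)}) (η.getD j z))⁻¹ := by
  obtain ⟨η, rfl⟩ := head?_eq_some_iff.1 hexc.2.1
  obtain ⟨hpath, hadj⟩ := isExcursion_cons_iff.1 hexc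
  rw [tsum_isExcursion_isLE_cons hz.1 hzw hadj, tsum_isPathTo_isLE hpath (nodup_cons.1 hsa).2 hw.1,
    loopErasureWeight_eq_prod z, Finset.prod_Ico_eq_prod_range]
  replace hk : η.length = k := by simpa using hk
  obtain ⟨k, rfl⟩ := Nat.exists_eq_add_one_of_ne_zero (hk ▸ (length_pos_iff.2 hpath.ne_nil).ne')
  simp [hk, pow_succ', mul_assoc, add_comm 1]

/-- for a finite nonempty `A ⊆ ℤ²`, distinct `z, w ∈ ∂A`, and a
self-avoiding excursion `η = [η_0, …, η_k]` in `A` from `z` to `w`, the total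
weight of excursions in `A` from `z` to `w` whose chronological loop erasure is `η`
equals `4^{−k} Π_{j=1}^{k−1} q_{A_j}(η_j)^{−1}`, where `A_j = A ∖ {η_1,…,η_{j−1}}`. -/
theorem statement14 (A : Set (ℤ × ℤ)) (hfin : A.Finite) (hne : A.Nonempty)
    (z w : ℤ × ℤ) (hz : z ∈ bdry A) (hw : w ∈ bdry A) (hzw : z ≠ w)
    (η : List (ℤ × ℤ)) (k : ℕ) (hk : η.length = k + 1)
    (hexc : IsExcursion A z w η) (hsa : η.Nodup) :
    (∑' ω : {ω : List (ℤ × ℤ) // IsExcursion A z w ω ∧ IsLE ω η}, pathWeight ω.val)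
      = (4 : ℝ≥0∞)⁻¹ ^ k *
        ∏ j ∈ Finset.Ico 1 k,
          (escProb (A \ {p | p ∈ η.tail.take (j - 1)}) (η.getD j z))⁻¹ :=
  statement14_general A z w hz hw hzw η k hk hexc hsa
end
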